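/- arXiv:2602.09967 — 7 statements merged into one kernel-verified Lean document; each statement's English description precedes it below -/
import Mathlib

section
/- (Proposition: the envelope premium formula is necessary for incentive compatibility.) If a menu (r_θ, p_θ)_{θ∈Θ} is incentive compatible, then for every θ ∈ Θ the premium satisfies the premium formula (★): p_θ = p_{θ̲} + ∫₀^{L̄} (1 − g_{θ̲}(F_{θ̲}(l))) r_{θ̲}(l) dl − ∫_{θ̲}^{θ} ∫₀^{L̄} D(s,l) r_s(l) dl ds − ∫₀^{L̄} (1 − g_θ(F_θ(l))) r_θ(l) dl. -/
/-!
The value `V θ = U_θ(r_θ, p_θ)` of an incentive compatible menu is the upper envelope of the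
family `θ ↦ U_θ(r_m, p_m)`, each member of which is `C·L̄`-Lipschitz in `θ`. Hence `V` is
Lipschitz, so absolutely continuous, and `V θ - V θ̲ = ∫ V'`. At an interior point `s` where `V`
is differentiable, `V - U_·(r_s, p_s)` attains its minimum `0` at `s`, so `V' s` is the
`θ`-derivative of `U_θ(r_s, p_s)` at `θ = s`, which is `∫ D(s, l) r_s(l) dl` by differentiation
under the integral sign. Unfolding `V` gives (★).
-/

open MeasureTheory

/-- The agent's Yaari dual utility: `U_θ(r, p) = -p - ∫₀^{L̄} (1 - g_θ(F_θ(l))) r(l) dl`. -/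
noncomputable def Uag (g F : ℝ → ℝ → ℝ) (Lbar θ : ℝ) (rr : ℝ → ℝ) (pp : ℝ) : ℝ :=
  -pp - ∫ l in (0 : ℝ)..Lbar, (1 - g θ (F θ l)) * rr l

open Set Filter Topology Interval intervalIntegral

theorem lipschitzOnWith_diag_of_le_diag {α : Type*} [PseudoMetricSpace α] {s : Set α}
    {u : α → α → ℝ} {K : NNReal} (hu : ∀ m ∈ s, LipschitzOnWith K (u · m) s)
    (hIC : ∀ θ ∈ s, ∀ θ' ∈ s, u θ θ' ≤ u θ θ) :
    LipschitzOnWith K (fun θ => u θ θ) s :=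
  LipschitzOnWith.of_le_add_mul K fun x hx y hy =>
    calc u x x ≤ u y x + K * dist x y := by
          linarith [abs_le.1 ((hu x hx).dist_le_mul x hx y hy), Real.dist_eq (u x x) (u y x)]
      _ ≤ u y y + K * dist x y := by linarith [hIC y hy x hx]

theorem hasDerivAt_diag_of_le_diag {s : Set ℝ} {u : ℝ → ℝ → ℝ} {x d : ℝ} (hs : s ∈ 𝓝 x)
    (hV : DifferentiableAt ℝ (fun θ => u θ θ) x) (hu : HasDerivAt (u · x) d x)
    (hIC : ∀ θ ∈ s, ∀ θ' ∈ s, u θ θ' ≤ u θ θ) :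
    HasDerivAt (fun θ => u θ θ) d x := by
  have hmin : IsLocalMin (fun θ => u θ θ - u θ x) x := by
    filter_upwards [hs] with y hy
    simpa using hIC y hy x (mem_of_mem_nhds hs)
  have hderiv := hmin.hasDerivAt_eq_zero (hV.hasDerivAt.sub hu)
  exact sub_eq_zero.1 hderiv ▸ hV.hasDerivAt

/-- The envelope theorem. -/
theorem sub_eq_integral_of_le_diag {a b : ℝ} {u : ℝ → ℝ → ℝ} {u' : ℝ → ℝ} {K : NNReal}
    (hu : ∀ m ∈ Icc a b, LipschitzOnWith K (u · m) (Icc a b))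
    (hu' : ∀ x ∈ Ioo a b, HasDerivAt (u · x) (u' x) x)
    (hIC : ∀ θ ∈ Icc a b, ∀ θ' ∈ Icc a b, u θ θ' ≤ u θ θ) {θ : ℝ} (hθ : θ ∈ Icc a b) :
    u θ θ - u a a = ∫ s in a..θ, u' s := by
  have hV : AbsolutelyContinuousOnInterval (fun θ => u θ θ) a θ :=
    ((lipschitzOnWith_diag_of_le_diag hu hIC).mono
      (uIcc_subset_Icc ⟨le_rfl, hθ.1.trans hθ.2⟩ hθ)).absolutelyContinuousOnInterval
  rw [← hV.integral_deriv_eq_sub, integral_of_le hθ.1, integral_of_le hθ.1,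
    integral_Ioc_eq_integral_Ioo, integral_Ioc_eq_integral_Ioo]
  refine setIntegral_congr_ae measurableSet_Ioo ?_
  filter_upwards [hV.ae_differentiableAt] with x hdiff hx
  have hx' : x ∈ Ioo a b := ⟨hx.1, hx.2.trans_le hθ.2⟩
  exact (hasDerivAt_diag_of_le_diag (Icc_mem_nhds hx'.1 hx'.2)
    (hdiff (Icc_subset_uIcc (Ioo_subset_Icc_self hx))) (hu' x hx') hIC).deriv

section Utility

variable {g F : ℝ → ℝ → ℝ} {Lbar : ℝ} {rr : ℝ → ℝ} {pp : ℝ} {s : Set ℝ} {C : NNReal}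

theorem LipschitzOnWith.sub_mul_const {f : ℝ → ℝ} {a c : ℝ} (hf : LipschitzOnWith C f s)
    (hc : |c| ≤ 1) : LipschitzOnWith C (fun θ => (a - f θ) * c) s :=
  LipschitzOnWith.of_dist_le_mul fun x hx y hy =>
    calc dist ((a - f x) * c) ((a - f y) * c) = dist (f x) (f y) * |c| := by
          rw [Real.dist_eq, Real.dist_eq, ← abs_mul, ← abs_neg]
          ring_nf
      _ ≤ C * dist x y * 1 :=
          mul_le_mul (hf.dist_le_mul x hx y hy) hc (abs_nonneg _) (by positivity)
      _ = C * dist x y := mul_one _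

theorem intervalIntegrable_one_sub_mul {f c : ℝ → ℝ} (hL : 0 ≤ Lbar) (hf : Measurable f)
    (hc : Measurable c) (hf1 : ∀ l ∈ Icc 0 Lbar, f l ∈ Icc (0 : ℝ) 1)
    (hc1 : ∀ l ∈ Icc 0 Lbar, |c l| ≤ 1) :
    IntervalIntegrable (fun l => (1 - f l) * c l) volume 0 Lbar := by
  refine (intervalIntegrable_const (c := (1 : ℝ))).mono_fun
    ((measurable_const.sub hf).mul hc).aestronglyMeasurable
    ((ae_restrict_iff' measurableSet_uIoc).2 (ae_of_all _ fun l hl => ?_))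
  have hl' : l ∈ Icc 0 Lbar := Ioc_subset_Icc_self (uIoc_of_le hL ▸ hl)
  simp only [norm_mul, norm_one, Real.norm_eq_abs]
  exact mul_le_one₀ (abs_le.2 ⟨by linarith [(hf1 l hl').2], by linarith [(hf1 l hl').1]⟩)
    (abs_nonneg _) (hc1 l hl')

theorem lipschitzOnWith_Uag (hL : 0 ≤ Lbar) (hr : ∀ l ∈ Icc 0 Lbar, |rr l| ≤ 1)
    (hint : ∀ θ ∈ s, IntervalIntegrable (fun l => (1 - g θ (F θ l)) * rr l) volume 0 Lbar)
    (hLip : ∀ l ∈ Icc 0 Lbar, LipschitzOnWith C (fun θ => g θ (F θ l)) s) :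
    LipschitzOnWith (C * Real.nnabs Lbar) (fun θ => Uag g F Lbar θ rr pp) s := by
  refine LipschitzOnWith.of_dist_le_mul fun x hx y hy => ?_
  rw [Uag, Uag, dist_sub_left, dist_eq_norm, ← integral_sub (hint x hx) (hint y hy)]
  calc _ ≤ C * dist x y * |Lbar - 0| := norm_integral_le_of_norm_le_const fun l hl => by
          have hl' : l ∈ Icc 0 Lbar := Ioc_subset_Icc_self (uIoc_of_le hL ▸ hl)
          rw [← dist_eq_norm]
          exact ((hLip l hl').sub_mul_const (hr l hl')).dist_le_mul x hx y hy
    _ = _ := by rw [sub_zero, NNReal.coe_mul, Real.coe_nnabs]; ring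

theorem hasDerivAt_Uag {x : ℝ} {d : ℝ → ℝ} (hs : s ∈ 𝓝 x) (hL : 0 ≤ Lbar)
    (hgF : ∀ θ, Measurable fun l => g θ (F θ l)) (hrr : Measurable rr) (hd : Measurable d)
    (hr : ∀ l ∈ Icc 0 Lbar, |rr l| ≤ 1)
    (hint : IntervalIntegrable (fun l => (1 - g x (F x l)) * rr l) volume 0 Lbar)
    (hLip : ∀ l ∈ Icc 0 Lbar, LipschitzOnWith C (fun θ => g θ (F θ l)) s)
    (hD : ∀ l ∈ Icc 0 Lbar, HasDerivAt (fun θ => g θ (F θ l)) (d l) x) :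
    HasDerivAt (fun θ => Uag g F Lbar θ rr pp) (∫ l in 0..Lbar, d l * rr l) x := by
  have hIcc : ∀ l ∈ Ι 0 Lbar, l ∈ Icc 0 Lbar := fun l hl =>
    Ioc_subset_Icc_self (uIoc_of_le hL ▸ hl)
  obtain ⟨-, h⟩ := hasDerivAt_integral_of_dominated_loc_of_lip
    (F := fun θ l => (1 - g θ (F θ l)) * rr l) (F' := fun l => -d l * rr l)
    (bound := fun _ => (C : ℝ)) hs
    (Eventually.of_forall fun θ => ((measurable_const.sub (hgF θ)).mul hrr).aestronglyMeasurable)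
    hint (hd.neg.mul hrr).aestronglyMeasurable
    (ae_of_all _ fun l hl => by
      simpa only [Real.nnabs_coe] using (hLip l (hIcc l hl)).sub_mul_const (hr l (hIcc l hl)))
    intervalIntegrable_const
    (ae_of_all _ fun l hl => ((hD l (hIcc l hl)).const_sub 1).mul_const (rr l))
  simpa only [Uag, neg_mul, intervalIntegral.integral_neg, neg_neg] using h.const_sub (-pp)

end Utility

theorem premium_formula_of_IC_general
    (θlow θhigh Lbar : ℝ) (hL : 0 < Lbar)
    (g : ℝ → ℝ → ℝ) (F : ℝ → ℝ → ℝ)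
    (hg_range : ∀ θ ∈ Set.Icc θlow θhigh, ∀ t ∈ Set.Icc (0 : ℝ) 1,
      g θ t ∈ Set.Icc (0 : ℝ) 1)
    (hF_range : ∀ θ ∈ Set.Icc θlow θhigh, ∀ l ∈ Set.Icc (0 : ℝ) Lbar,
      F θ l ∈ Set.Icc (0 : ℝ) 1)
    (hgF_meas : Measurable fun x : ℝ × ℝ => g x.1 (F x.1 x.2))
    (r : ℝ → ℝ → ℝ) (p : ℝ → ℝ)
    (hr_meas : Measurable (Function.uncurry r))
    (hr_range : ∀ θ ∈ Set.Icc θlow θhigh, ∀ l ∈ Set.Icc (0 : ℝ) Lbar,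
      r θ l ∈ Set.Icc (0 : ℝ) 1)
    (D : ℝ → ℝ → ℝ)
    (hD : ∀ l ∈ Set.Icc (0 : ℝ) Lbar, ∀ s ∈ Set.Icc θlow θhigh,
      HasDerivWithinAt (fun t => g t (F t l)) (D s l) (Set.Icc θlow θhigh) s)
    (hLip : ∃ C : NNReal, ∀ l ∈ Set.Icc (0 : ℝ) Lbar,
      LipschitzOnWith C (fun s => g s (F s l)) (Set.Icc θlow θhigh))
    (hD_meas : Measurable (Function.uncurry D))
    (hIC : ∀ θ ∈ Set.Icc θlow θhigh, ∀ θ' ∈ Set.Icc θlow θhigh,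
      Uag g F Lbar θ (r θ') (p θ') ≤ Uag g F Lbar θ (r θ) (p θ)) :
    ∀ θ ∈ Set.Icc θlow θhigh,
      p θ = p θlow + (∫ l in (0 : ℝ)..Lbar, (1 - g θlow (F θlow l)) * r θlow l)
        - (∫ s in θlow..θ, ∫ l in (0 : ℝ)..Lbar, D s l * r s l)
        - ∫ l in (0 : ℝ)..Lbar, (1 - g θ (F θ l)) * r θ l := by
  obtain ⟨C, hC⟩ := hLip
  intro θ hθ
  have hr_abs : ∀ m ∈ Icc θlow θhigh, ∀ l ∈ Icc 0 Lbar, |r m l| ≤ 1 := fun m hm l hl =>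
    abs_le.2 ⟨by linarith [(hr_range m hm l hl).1], (hr_range m hm l hl).2⟩
  have hint : ∀ θ ∈ Icc θlow θhigh, ∀ m ∈ Icc θlow θhigh,
      IntervalIntegrable (fun l => (1 - g θ (F θ l)) * r m l) volume 0 Lbar :=
    fun θ hθ m hm => intervalIntegrable_one_sub_mul hL.le
      (hgF_meas.comp measurable_prodMk_left) (hr_meas.comp measurable_prodMk_left)
      (fun l hl => hg_range θ hθ _ (hF_range θ hθ l hl)) (hr_abs m hm)
  have key := sub_eq_integral_of_le_diag (u := fun θ m => Uag g F Lbar θ (r m) (p m))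
    (u' := fun s => ∫ l in 0..Lbar, D s l * r s l)
    (fun m hm => lipschitzOnWith_Uag hL.le (hr_abs m hm) (fun θ hθ => hint θ hθ m hm) hC)
    (fun x hx => hasDerivAt_Uag (Icc_mem_nhds hx.1 hx.2) hL.le
      (fun θ => hgF_meas.comp measurable_prodMk_left) (hr_meas.comp measurable_prodMk_left)
      (hD_meas.comp measurable_prodMk_left) (hr_abs x (Ioo_subset_Icc_self hx))
      (hint x (Ioo_subset_Icc_self hx) x (Ioo_subset_Icc_self hx)) hC
      fun l hl => (hD l hl x (Ioo_subset_Icc_self hx)).hasDerivAt (Icc_mem_nhds hx.1 hx.2))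
    hIC hθ
  simp only [Uag] at key
  linarith

/-- **The envelope premium formula is necessary for incentive compatibility.** If the menu
`(r_θ, p_θ)_{θ∈Θ}` is incentive compatible, then every premium satisfies (★). -/
theorem premium_formula_of_IC
    (θlow θhigh Lbar : ℝ) (hθ : θlow < θhigh) (hL : 0 < Lbar)
    (g : ℝ → ℝ → ℝ) (F : ℝ → ℝ → ℝ)
    (hg_mono : ∀ θ ∈ Set.Icc θlow θhigh, MonotoneOn (g θ) (Set.Icc (0 : ℝ) 1))
    (hg0 : ∀ θ ∈ Set.Icc θlow θhigh, g θ 0 = 0)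
    (hg1 : ∀ θ ∈ Set.Icc θlow θhigh, g θ 1 = 1)
    (hg_range : ∀ θ ∈ Set.Icc θlow θhigh, ∀ t ∈ Set.Icc (0 : ℝ) 1,
      g θ t ∈ Set.Icc (0 : ℝ) 1)
    (hF_range : ∀ θ ∈ Set.Icc θlow θhigh, ∀ l ∈ Set.Icc (0 : ℝ) Lbar,
      F θ l ∈ Set.Icc (0 : ℝ) 1)
    (hgF_meas : Measurable fun x : ℝ × ℝ => g x.1 (F x.1 x.2))
    (r : ℝ → ℝ → ℝ) (p : ℝ → ℝ)
    (hr_meas : Measurable (Function.uncurry r)) (hp_meas : Measurable p)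
    (hr_range : ∀ θ ∈ Set.Icc θlow θhigh, ∀ l ∈ Set.Icc (0 : ℝ) Lbar,
      r θ l ∈ Set.Icc (0 : ℝ) 1)
    (D : ℝ → ℝ → ℝ)
    (hD : ∀ l ∈ Set.Icc (0 : ℝ) Lbar, ∀ s ∈ Set.Icc θlow θhigh,
      HasDerivWithinAt (fun t => g t (F t l)) (D s l) (Set.Icc θlow θhigh) s)
    (hLip : ∃ C : NNReal, ∀ l ∈ Set.Icc (0 : ℝ) Lbar,
      LipschitzOnWith C (fun s => g s (F s l)) (Set.Icc θlow θhigh))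
    (hD_meas : Measurable (Function.uncurry D))
    (hIC : ∀ θ ∈ Set.Icc θlow θhigh, ∀ θ' ∈ Set.Icc θlow θhigh,
      Uag g F Lbar θ (r θ') (p θ') ≤ Uag g F Lbar θ (r θ) (p θ)) :
    ∀ θ ∈ Set.Icc θlow θhigh,
      p θ = p θlow + (∫ l in (0 : ℝ)..Lbar, (1 - g θlow (F θlow l)) * r θlow l)
        - (∫ s in θlow..θ, ∫ l in (0 : ℝ)..Lbar, D s l * r s l)
        - ∫ l in (0 : ℝ)..Lbar, (1 - g θ (F θ l)) * r θ l :=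
  premium_formula_of_IC_general θlow θhigh Lbar hL g F hg_range hF_range hgF_meas r p hr_meas
    hr_range D hD hLip hD_meas hIC
end

section
/- (Proposition: characterization of incentive compatibility for submodular retentions.) Suppose the menu's retentions are submodular, i.e. r_θ(l) is nonincreasing in θ for every l ∈ [0,L̄]. Then the menu (r_θ, p_θ)_{θ∈Θ} is incentive compatible if and only if for every θ ∈ Θ the premium satisfies the premium formula (★): p_θ = p_{θ̲} + ∫₀^{L̄} (1 − g_{θ̲}(F_{θ̲}(l))) r_{θ̲}(l) dl − ∫_{θ̲}^{θ} ∫₀^{L̄} D(s,l) r_s(l) dl ds − ∫₀^{L̄} (1 − g_θ(F_θ(l))) r_θ(l) dl. -/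
/-!
Write `U θ t` for the utility of type `θ` choosing the contract of type `t`, and
`Φ s t = ∫₀^{L̄} D(s,l) r_t(l) dl`. The fundamental theorem of calculus in the type and Fubini give
the envelope identity `U v t - U u t = ∫_u^v Φ s t ds`, and submodularity together with `D ≤ 0`
makes `Φ s` nondecreasing in the report. The premium formula says exactly that the truthful
utility `V θ = U θ θ` equals `V θ̲ + ∫_{θ̲}^θ Φ s s ds`; given it, IC follows by comparing `Φ s s`
with `Φ s t` between `θ` and `t`. Conversely, IC squeezes `V v - V u` between `∫_u^v Φ s u` and
`∫_u^v Φ s v`; as `|D| ≤ C` (the Lipschitz constant), the gap is at most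
`(v - u) C (R u - R v)` with `R t = ∫ r_t` nonincreasing, so along a uniform partition of
`[θ̲, θ]` into `n` pieces the premium formula fails by at most `(θ - θ̲) C (R θ̲ - R θ) / n`.
-/

open MeasureTheory

open Set Filter Topology Function NNReal

theorem HasDerivWithinAt.le_of_lipschitzOn {𝕜 E : Type*} [NontriviallyNormedField 𝕜]
    [NormedAddCommGroup E] [NormedSpace 𝕜 E] {f : 𝕜 → E} {f' : E} {s : Set 𝕜} {x : 𝕜} {C : ℝ≥0}
    (hf : HasDerivWithinAt f f' s x) (hx : AccPt x (𝓟 s)) (hxs : x ∈ s)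
    (hlip : LipschitzOnWith C f s) : ‖f'‖ ≤ C := by
  have : (𝓝[s \ {x}] x).NeBot := accPt_principal_iff_nhdsWithin.mp hx
  refine le_of_tendsto (hasDerivWithinAt_iff_tendsto_slope.mp hf).norm ?_
  filter_upwards [self_mem_nhdsWithin] with y hy
  have hyx : 0 < ‖y - x‖ := norm_pos_iff.2 (sub_ne_zero.2 hy.2)
  rw [slope_def_module, norm_smul, norm_inv, inv_mul_le_iff₀ hyx, mul_comm]
  exact hlip.norm_sub_le hy.1 hxs

theorem abs_mul_le_of_mem_unitInterval {x y M : ℝ} (hx : |x| ≤ M) (hy : y ∈ Icc (0 : ℝ) 1) :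
    |x * y| ≤ M := by
  rw [abs_mul, abs_of_nonneg hy.1]
  exact (mul_le_of_le_one_right (abs_nonneg x) hy.2).trans hx

theorem integrableOn_of_abs_le {α : Type*} [MeasurableSpace α] {μ : Measure α} {f : α → ℝ}
    {s : Set α} {M : ℝ} (hs : MeasurableSet s) (hμs : μ s ≠ ⊤) (hf : Measurable f)
    (hM : ∀ x ∈ s, |f x| ≤ M) : IntegrableOn f s μ :=
  Measure.integrableOn_of_bounded hμs hf.aestronglyMeasurable (ae_restrict_of_forall_mem hs hM)

theorem intervalIntegrable_of_abs_le {f : ℝ → ℝ} {a b M : ℝ} (hab : a ≤ b) (hf : Measurable f)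
    (hM : ∀ x ∈ Icc a b, |f x| ≤ M) : IntervalIntegrable f volume a b :=
  (intervalIntegrable_iff_integrableOn_Ioc_of_le hab).2 <|
    integrableOn_of_abs_le measurableSet_Ioc measure_Ioc_lt_top.ne hf
      fun x hx => hM x (Ioc_subset_Icc_self hx)

theorem Measurable.intervalIntegral_prod_right {k : ℝ → ℝ → ℝ} (hk : Measurable (uncurry k))
    (a b : ℝ) : Measurable fun s => ∫ l in a..b, k s l :=
  have hk := hk.stronglyMeasurable
  (hk.integral_prod_right.sub hk.integral_prod_right).measurable

theorem intervalIntegrable_intervalIntegral_of_abs_le {k : ℝ → ℝ → ℝ} {a b L M : ℝ}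
    (hab : a ≤ b) (hL : 0 ≤ L) (hk : Measurable (uncurry k))
    (hM : ∀ s ∈ Icc a b, ∀ l ∈ Icc 0 L, |k s l| ≤ M) :
    IntervalIntegrable (fun s => ∫ l in (0 : ℝ)..L, k s l) volume a b := by
  refine intervalIntegrable_of_abs_le (M := M * L) hab (hk.intervalIntegral_prod_right 0 L)
    fun s hs => ?_
  have := intervalIntegral.norm_integral_le_of_norm_le_const (C := M) (f := k s) fun l hl =>
    hM s hs l (Ioc_subset_Icc_self (uIoc_of_le hL ▸ hl))
  simpa [abs_of_nonneg hL] using this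

theorem integral_eq_sub_of_hasDerivWithinAt_Icc {E : Type*} [NormedAddCommGroup E]
    [NormedSpace ℝ E] [CompleteSpace E] {f f' : ℝ → E} {a b : ℝ} (hab : a ≤ b)
    (hf : ∀ x ∈ Icc a b, HasDerivWithinAt f (f' x) (Icc a b) x)
    (hint : IntervalIntegrable f' volume a b) : ∫ x in a..b, f' x = f b - f a :=
  intervalIntegral.integral_eq_sub_of_hasDeriv_right_of_le hab
    (fun x hx => (hf x hx).continuousWithinAt)
    (fun x hx => ((hf x (Ioo_subset_Icc_self hx)).hasDerivAt
      (Icc_mem_nhds hx.1 hx.2)).hasDerivWithinAt) hint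

theorem eq_of_abs_sub_le_mul_sub {W R : ℝ → ℝ} {a b : ℝ} (hab : a ≤ b)
    (h : ∀ u ∈ Icc a b, ∀ v ∈ Icc a b, u ≤ v → |W v - W u| ≤ (v - u) * (R u - R v)) :
    W b = W a := by
  suffices hn : ∀ n : ℕ, 0 < n → |W b - W a| ≤ (b - a) * (R a - R b) / n by
    have hlim := tendsto_const_div_atTop_nhds_zero_nat ((b - a) * (R a - R b))
    have : |W b - W a| ≤ 0 := ge_of_tendsto hlim (eventually_atTop.2 ⟨1, hn⟩)
    exact sub_eq_zero.1 (abs_nonpos_iff.1 this)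
  intro n hn
  set δ := (b - a) / n with hδ
  set t : ℕ → ℝ := fun i => a + i * δ
  have hδ_nonneg : 0 ≤ δ := div_nonneg (sub_nonneg.2 hab) (Nat.cast_nonneg n)
  have ht_succ : ∀ i, t (i + 1) - t i = δ := fun i => by simp only [t]; push_cast; ring
  have ht0 : t 0 = a := by simp [t]
  have htn : t n = b := by simp only [t, hδ]; field_simp; ring
  have ht_mem : ∀ i ≤ n, t i ∈ Icc a b := fun i hi => by
    have := mul_le_mul_of_nonneg_right (Nat.cast_le.2 hi : (i : ℝ) ≤ n) hδ_nonneg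
    rw [← htn]
    exact ⟨le_add_of_nonneg_right (mul_nonneg i.cast_nonneg hδ_nonneg), add_le_add_right this a⟩
  calc |W b - W a| = |∑ i ∈ Finset.range n, (W (t (i + 1)) - W (t i))| := by
        rw [Finset.sum_range_sub (fun i => W (t i)), ht0, htn]
    _ ≤ ∑ i ∈ Finset.range n, |W (t (i + 1)) - W (t i)| := Finset.abs_sum_le_sum_abs _ _
    _ ≤ ∑ i ∈ Finset.range n, δ * (R (t i) - R (t (i + 1))) := by
        refine Finset.sum_le_sum fun i hi => ?_
        have hi := Finset.mem_range.1 hi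
        rw [← ht_succ i]
        exact h _ (ht_mem i hi.le) _ (ht_mem (i + 1) hi) (by linarith [ht_succ i])
    _ = (b - a) * (R a - R b) / n := by
        rw [← Finset.mul_sum, Finset.sum_range_sub' (fun i => R (t i)), ht0, htn, hδ]; ring

section Envelope

variable {a b : ℝ} {U φ : ℝ → ℝ → ℝ} {R : ℝ → ℝ}

/-- `U θ t` is the utility of type `θ` when it reports `t`. -/
def IncentiveCompatibleOn (U : ℝ → ℝ → ℝ) (Θ : Set ℝ) : Prop :=
  ∀ θ ∈ Θ, ∀ t ∈ Θ, U θ t ≤ U θ θ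

theorem integral_diag_mem_Icc (hφ_mono : ∀ s ∈ Icc a b, MonotoneOn (φ s) (Icc a b))
    (hφ_int : ∀ t ∈ Icc a b, IntervalIntegrable (fun s => φ s t) volume a b)
    (hdiag_int : IntervalIntegrable (fun s => φ s s) volume a b)
    {u v : ℝ} (hu : u ∈ Icc a b) (hv : v ∈ Icc a b) (huv : u ≤ v) :
    ∫ s in u..v, φ s s ∈ Icc (∫ s in u..v, φ s u) (∫ s in u..v, φ s v) := by
  have hsub : uIcc u v ⊆ uIcc a b := uIcc_subset_uIcc (Icc_subset_uIcc hu) (Icc_subset_uIcc hv)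
  have hmem : ∀ s ∈ Icc u v, s ∈ Icc a b := fun s hs => ⟨hu.1.trans hs.1, hs.2.trans hv.2⟩
  exact ⟨intervalIntegral.integral_mono_on huv ((hφ_int u hu).mono_set hsub)
      (hdiag_int.mono_set hsub) fun s hs => hφ_mono s (hmem s hs) hu (hmem s hs) hs.1,
    intervalIntegral.integral_mono_on huv (hdiag_int.mono_set hsub)
      ((hφ_int v hv).mono_set hsub) fun s hs => hφ_mono s (hmem s hs) (hmem s hs) hv hs.2⟩

theorem integral_diag_sub_integral_diag (hdiag_int : IntervalIntegrable (fun s => φ s s) volume a b)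
    {u v : ℝ} (hu : u ∈ Icc a b) (hv : v ∈ Icc a b) :
    (∫ s in a..v, φ s s) - ∫ s in a..u, φ s s = ∫ s in u..v, φ s s :=
  intervalIntegral.integral_interval_sub_left
    (hdiag_int.mono_set (uIcc_subset_uIcc_left (Icc_subset_uIcc hv)))
    (hdiag_int.mono_set (uIcc_subset_uIcc_left (Icc_subset_uIcc hu)))

theorem abs_sub_le_of_incentiveCompatibleOn (hIC : IncentiveCompatibleOn U (Icc a b))
    (hU : ∀ u ∈ Icc a b, ∀ v ∈ Icc a b, u ≤ v → ∀ t ∈ Icc a b,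
      U v t - U u t = ∫ s in u..v, φ s t)
    (hφ_mono : ∀ s ∈ Icc a b, MonotoneOn (φ s) (Icc a b))
    (hφ_int : ∀ t ∈ Icc a b, IntervalIntegrable (fun s => φ s t) volume a b)
    (hdiag_int : IntervalIntegrable (fun s => φ s s) volume a b)
    (hR : ∀ s ∈ Icc a b, ∀ u ∈ Icc a b, ∀ v ∈ Icc a b, u ≤ v → φ s v - φ s u ≤ R u - R v)
    {u v : ℝ} (hu : u ∈ Icc a b) (hv : v ∈ Icc a b) (huv : u ≤ v) :
    |(U v v - ∫ s in a..v, φ s s) - (U u u - ∫ s in a..u, φ s s)| ≤ (v - u) * (R u - R v) := by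
  have hsub : uIcc u v ⊆ uIcc a b := uIcc_subset_uIcc (Icc_subset_uIcc hu) (Icc_subset_uIcc hv)
  have hwidth : (∫ s in u..v, φ s v) - ∫ s in u..v, φ s u ≤ (v - u) * (R u - R v) := by
    have hv_int := (hφ_int v hv).mono_set hsub
    have hu_int := (hφ_int u hu).mono_set hsub
    calc (∫ s in u..v, φ s v) - ∫ s in u..v, φ s u
        = ∫ s in u..v, (φ s v - φ s u) := (intervalIntegral.integral_sub hv_int hu_int).symm
      _ ≤ ∫ _ in u..v, (R u - R v) :=
        intervalIntegral.integral_mono_on huv (hv_int.sub hu_int) intervalIntegrable_const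
          fun s hs => hR s ⟨hu.1.trans hs.1, hs.2.trans hv.2⟩ u hu v hv huv
      _ = (v - u) * (R u - R v) := by rw [intervalIntegral.integral_const, smul_eq_mul]
  have hdiag := integral_diag_mem_Icc hφ_mono hφ_int hdiag_int hu hv huv
  have hsplit := integral_diag_sub_integral_diag hdiag_int hu hv
  have hUu := hU u hu v hv huv u hu
  have hUv := hU u hu v hv huv v hv
  have hICu := hIC u hu v hv
  have hICv := hIC v hv u hu
  rw [abs_le]
  constructor <;> linarith [hdiag.1, hdiag.2]

theorem envelope_formula_of_incentiveCompatibleOn (hIC : IncentiveCompatibleOn U (Icc a b))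
    (hU : ∀ u ∈ Icc a b, ∀ v ∈ Icc a b, u ≤ v → ∀ t ∈ Icc a b,
      U v t - U u t = ∫ s in u..v, φ s t)
    (hφ_mono : ∀ s ∈ Icc a b, MonotoneOn (φ s) (Icc a b))
    (hφ_int : ∀ t ∈ Icc a b, IntervalIntegrable (fun s => φ s t) volume a b)
    (hdiag_int : IntervalIntegrable (fun s => φ s s) volume a b)
    (hR : ∀ s ∈ Icc a b, ∀ u ∈ Icc a b, ∀ v ∈ Icc a b, u ≤ v → φ s v - φ s u ≤ R u - R v) :
    ∀ θ ∈ Icc a b, U θ θ = U a a + ∫ s in a..θ, φ s s := by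
  intro θ hθ
  have hsub : Icc a θ ⊆ Icc a b := Icc_subset_Icc_right hθ.2
  have := eq_of_abs_sub_le_mul_sub (W := fun x => U x x - ∫ s in a..x, φ s s) hθ.1
    fun u hu v hv huv => abs_sub_le_of_incentiveCompatibleOn hIC hU hφ_mono hφ_int hdiag_int hR
      (hsub hu) (hsub hv) huv
  simp only [intervalIntegral.integral_same, sub_zero] at this
  linarith

theorem incentiveCompatibleOn_of_envelope_formula
    (hU : ∀ u ∈ Icc a b, ∀ v ∈ Icc a b, u ≤ v → ∀ t ∈ Icc a b,
      U v t - U u t = ∫ s in u..v, φ s t)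
    (hφ_mono : ∀ s ∈ Icc a b, MonotoneOn (φ s) (Icc a b))
    (hφ_int : ∀ t ∈ Icc a b, IntervalIntegrable (fun s => φ s t) volume a b)
    (hdiag_int : IntervalIntegrable (fun s => φ s s) volume a b)
    (hformula : ∀ θ ∈ Icc a b, U θ θ = U a a + ∫ s in a..θ, φ s s) :
    IncentiveCompatibleOn U (Icc a b) := by
  intro θ hθ t ht
  have hθ_eq := hformula θ hθ
  have ht_eq := hformula t ht
  rcases le_total t θ with htθ | hθt
  · have hdiag := integral_diag_mem_Icc hφ_mono hφ_int hdiag_int ht hθ htθ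
    have hsplit := integral_diag_sub_integral_diag hdiag_int ht hθ
    have := hU t ht θ hθ htθ t ht
    linarith [hdiag.1]
  · have hdiag := integral_diag_mem_Icc hφ_mono hφ_int hdiag_int hθ ht hθt
    have hsplit := integral_diag_sub_integral_diag hdiag_int hθ ht
    have := hU θ hθ t ht hθt t ht
    linarith [hdiag.2]

theorem incentiveCompatibleOn_iff_envelope_formula
    (hU : ∀ u ∈ Icc a b, ∀ v ∈ Icc a b, u ≤ v → ∀ t ∈ Icc a b,
      U v t - U u t = ∫ s in u..v, φ s t)
    (hφ_mono : ∀ s ∈ Icc a b, MonotoneOn (φ s) (Icc a b))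
    (hφ_int : ∀ t ∈ Icc a b, IntervalIntegrable (fun s => φ s t) volume a b)
    (hdiag_int : IntervalIntegrable (fun s => φ s s) volume a b)
    (hR : ∀ s ∈ Icc a b, ∀ u ∈ Icc a b, ∀ v ∈ Icc a b, u ≤ v → φ s v - φ s u ≤ R u - R v) :
    IncentiveCompatibleOn U (Icc a b) ↔ ∀ θ ∈ Icc a b, U θ θ = U a a + ∫ s in a..θ, φ s s :=
  ⟨fun hIC => envelope_formula_of_incentiveCompatibleOn hIC hU hφ_mono hφ_int hdiag_int hR,
    incentiveCompatibleOn_of_envelope_formula hU hφ_mono hφ_int hdiag_int⟩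

end Envelope

theorem Uag_sub_Uag_eq_integral {g F D : ℝ → ℝ → ℝ} {a b L u v C : ℝ} {w : ℝ → ℝ} (pp : ℝ)
    (hL : 0 ≤ L) (hu : u ∈ Icc a b) (hv : v ∈ Icc a b) (huv : u ≤ v)
    (hG_meas : Measurable (uncurry fun t l => g t (F t l)))
    (hG : ∀ θ ∈ Icc a b, ∀ l ∈ Icc (0 : ℝ) L, g θ (F θ l) ∈ Icc (0 : ℝ) 1)
    (hD : ∀ l ∈ Icc (0 : ℝ) L, ∀ s ∈ Icc a b,
      HasDerivWithinAt (fun t => g t (F t l)) (D s l) (Icc a b) s)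
    (hD_meas : Measurable (uncurry D)) (hDC : ∀ s ∈ Icc a b, ∀ l ∈ Icc (0 : ℝ) L, |D s l| ≤ C)
    (hw_meas : Measurable w) (hw : ∀ l ∈ Icc (0 : ℝ) L, w l ∈ Icc (0 : ℝ) 1) :
    Uag g F L v w pp - Uag g F L u w pp = ∫ s in u..v, ∫ l in (0 : ℝ)..L, D s l * w l := by
  have huvΘ : Icc u v ⊆ Icc a b := Icc_subset_Icc hu.1 hv.2
  have hJ_int : ∀ θ ∈ Icc a b,
      IntervalIntegrable (fun l => (1 - g θ (F θ l)) * w l) volume 0 L := fun θ hθ =>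
    intervalIntegrable_of_abs_le (M := 1) hL
      ((measurable_const.sub hG_meas.of_uncurry_left).mul hw_meas)
      fun l hl => abs_mul_le_of_mem_unitInterval
        (abs_le.2 ⟨by linarith [(hG θ hθ l hl).2], by linarith [(hG θ hθ l hl).1]⟩) (hw l hl)
  have hftc : ∀ l ∈ Icc (0 : ℝ) L, ∫ s in u..v, D s l = g v (F v l) - g u (F u l) :=
    fun l hl => integral_eq_sub_of_hasDerivWithinAt_Icc huv
      (fun s hs => (hD l hl s (huvΘ hs)).mono huvΘ)
      (intervalIntegrable_of_abs_le huv hD_meas.of_uncurry_right fun s hs => hDC s (huvΘ hs) l hl)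
  have hprod : IntegrableOn (uncurry fun l s => D s l * w l) (uIoc 0 L ×ˢ uIoc u v) := by
    rw [uIoc_of_le hL, uIoc_of_le huv]
    refine integrableOn_of_abs_le (measurableSet_Ioc.prod measurableSet_Ioc) ?_
      ((hD_meas.comp measurable_swap).mul (hw_meas.comp measurable_fst)) fun x hx =>
        abs_mul_le_of_mem_unitInterval (hDC x.2 (huvΘ (Ioc_subset_Icc_self hx.2)) x.1
          (Ioc_subset_Icc_self hx.1)) (hw x.1 (Ioc_subset_Icc_self hx.1))
    rw [Measure.volume_eq_prod, Measure.prod_prod]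
    exact ENNReal.mul_ne_top measure_Ioc_lt_top.ne measure_Ioc_lt_top.ne
  calc Uag g F L v w pp - Uag g F L u w pp
      = ∫ l in (0 : ℝ)..L, ((1 - g u (F u l)) * w l - (1 - g v (F v l)) * w l) := by
        rw [Uag, Uag, intervalIntegral.integral_sub (hJ_int u hu) (hJ_int v hv)]
        ring
    _ = ∫ l in (0 : ℝ)..L, ∫ s in u..v, D s l * w l := by
        refine intervalIntegral.integral_congr fun l hl => ?_
        rw [uIcc_of_le hL] at hl
        simp only [intervalIntegral.integral_mul_const, hftc l hl]
        ring
    _ = ∫ s in u..v, ∫ l in (0 : ℝ)..L, D s l * w l := intervalIntegral_intervalIntegral_swap hprod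

theorem monotoneOn_integral_mul_of_nonpos {k : ℝ → ℝ} {r : ℝ → ℝ → ℝ} {L : ℝ} {T : Set ℝ}
    (hL : 0 ≤ L) (hk : ∀ l ∈ Icc 0 L, k l ≤ 0) (hr : ∀ l ∈ Icc 0 L, AntitoneOn (fun t => r t l) T)
    (hint : ∀ t ∈ T, IntervalIntegrable (fun l => k l * r t l) volume 0 L) :
    MonotoneOn (fun t => ∫ l in (0 : ℝ)..L, k l * r t l) T := fun u hu v hv huv =>
  intervalIntegral.integral_mono_on hL (hint u hu) (hint v hv) fun l hl =>
    mul_le_mul_of_nonpos_left (hr l hl hu hv huv) (hk l hl)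

theorem integral_mul_sub_integral_mul_le {k f g : ℝ → ℝ} {L C : ℝ} (hL : 0 ≤ L)
    (hk : ∀ l ∈ Icc 0 L, |k l| ≤ C) (hfg : ∀ l ∈ Icc 0 L, f l ≤ g l)
    (hkf : IntervalIntegrable (fun l => k l * f l) volume 0 L)
    (hkg : IntervalIntegrable (fun l => k l * g l) volume 0 L)
    (hf : IntervalIntegrable f volume 0 L) (hg : IntervalIntegrable g volume 0 L) :
    (∫ l in (0 : ℝ)..L, k l * f l) - ∫ l in (0 : ℝ)..L, k l * g l
      ≤ C * ((∫ l in (0 : ℝ)..L, g l) - ∫ l in (0 : ℝ)..L, f l) := by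
  rw [← intervalIntegral.integral_sub hkf hkg, ← intervalIntegral.integral_sub hg hf,
    ← intervalIntegral.integral_const_mul]
  refine intervalIntegral.integral_mono_on hL (hkf.sub hkg) ((hg.sub hf).const_mul C)
    fun l hl => ?_
  calc k l * f l - k l * g l = -k l * (g l - f l) := by ring
    _ ≤ C * (g l - f l) :=
      mul_le_mul_of_nonneg_right ((neg_le_abs (k l)).trans (hk l hl)) (sub_nonneg.2 (hfg l hl))

theorem IC_iff_premium_formula_of_submodular_general
    (θlow θhigh Lbar : ℝ) (hθ : θlow < θhigh) (hL : 0 < Lbar)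
    (g : ℝ → ℝ → ℝ) (F : ℝ → ℝ → ℝ)
    (hg_range : ∀ θ ∈ Set.Icc θlow θhigh, ∀ t ∈ Set.Icc (0 : ℝ) 1,
      g θ t ∈ Set.Icc (0 : ℝ) 1)
    (hF_range : ∀ θ ∈ Set.Icc θlow θhigh, ∀ l ∈ Set.Icc (0 : ℝ) Lbar,
      F θ l ∈ Set.Icc (0 : ℝ) 1)
    (hgF_meas : Measurable fun x : ℝ × ℝ => g x.1 (F x.1 x.2))
    (r : ℝ → ℝ → ℝ) (p : ℝ → ℝ)
    (hr_meas : Measurable (Function.uncurry r))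
    (hr_range : ∀ θ ∈ Set.Icc θlow θhigh, ∀ l ∈ Set.Icc (0 : ℝ) Lbar,
      r θ l ∈ Set.Icc (0 : ℝ) 1)
    (D : ℝ → ℝ → ℝ)
    (hD : ∀ l ∈ Set.Icc (0 : ℝ) Lbar, ∀ s ∈ Set.Icc θlow θhigh,
      HasDerivWithinAt (fun t => g t (F t l)) (D s l) (Set.Icc θlow θhigh) s)
    (hLip : ∃ C : NNReal, ∀ l ∈ Set.Icc (0 : ℝ) Lbar,
      LipschitzOnWith C (fun s => g s (F s l)) (Set.Icc θlow θhigh))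
    (hD_meas : Measurable (Function.uncurry D))
    (hD_nonpos : ∀ s ∈ Set.Icc θlow θhigh, ∀ l ∈ Set.Icc (0 : ℝ) Lbar, D s l ≤ 0)
    -- submodularity: `r_θ(l)` is nonincreasing in `θ` for every `l`
    (hsub : ∀ l ∈ Set.Icc (0 : ℝ) Lbar, ∀ θ₁ ∈ Set.Icc θlow θhigh,
      ∀ θ₂ ∈ Set.Icc θlow θhigh, θ₁ ≤ θ₂ → r θ₂ l ≤ r θ₁ l) :
    (∀ θ ∈ Set.Icc θlow θhigh, ∀ θ' ∈ Set.Icc θlow θhigh,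
        Uag g F Lbar θ (r θ') (p θ') ≤ Uag g F Lbar θ (r θ) (p θ)) ↔
      (∀ θ ∈ Set.Icc θlow θhigh,
        p θ = p θlow + (∫ l in (0 : ℝ)..Lbar, (1 - g θlow (F θlow l)) * r θlow l)
          - (∫ s in θlow..θ, ∫ l in (0 : ℝ)..Lbar, D s l * r s l)
          - ∫ l in (0 : ℝ)..Lbar, (1 - g θ (F θ l)) * r θ l) := by
  obtain ⟨C, hC⟩ := hLip
  have hDC : ∀ s ∈ Icc θlow θhigh, ∀ l ∈ Icc (0 : ℝ) Lbar, |D s l| ≤ C := fun s hs l hl =>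
    (hD l hl s hs).le_of_lipschitzOn (uniqueDiffOn_Icc hθ s hs).accPt hs (hC l hl)
  have hr_int : ∀ t ∈ Icc θlow θhigh, IntervalIntegrable (r t) volume 0 Lbar := fun t ht =>
    intervalIntegrable_of_abs_le hL.le hr_meas.of_uncurry_left fun l hl =>
      abs_le.2 ⟨by linarith [(hr_range t ht l hl).1], (hr_range t ht l hl).2⟩
  have hDr_int : ∀ s ∈ Icc θlow θhigh, ∀ t ∈ Icc θlow θhigh,
      IntervalIntegrable (fun l => D s l * r t l) volume 0 Lbar := fun s hs t ht =>
    intervalIntegrable_of_abs_le hL.le (hD_meas.of_uncurry_left.mul hr_meas.of_uncurry_left)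
      fun l hl => abs_mul_le_of_mem_unitInterval (hDC s hs l hl) (hr_range t ht l hl)
  have hU : ∀ u ∈ Icc θlow θhigh, ∀ v ∈ Icc θlow θhigh, u ≤ v → ∀ t ∈ Icc θlow θhigh,
      Uag g F Lbar v (r t) (p t) - Uag g F Lbar u (r t) (p t)
        = ∫ s in u..v, ∫ l in (0 : ℝ)..Lbar, D s l * r t l := fun u hu v hv huv t ht =>
    Uag_sub_Uag_eq_integral (p t) hL.le hu hv huv hgF_meas
      (fun θ hθ l hl => hg_range θ hθ _ (hF_range θ hθ l hl)) hD hD_meas hDC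
      hr_meas.of_uncurry_left (hr_range t ht)
  refine (incentiveCompatibleOn_iff_envelope_formula (U := fun θ t => Uag g F Lbar θ (r t) (p t))
    (R := fun t => C * ∫ l in (0 : ℝ)..Lbar, r t l) hU
    (fun s hs => monotoneOn_integral_mul_of_nonpos hL.le (hD_nonpos s hs) hsub (hDr_int s hs))
    (fun t ht => intervalIntegrable_intervalIntegral_of_abs_le hθ.le hL.le
      (hD_meas.mul (hr_meas.of_uncurry_left.comp measurable_snd)) fun s hs l hl =>
        abs_mul_le_of_mem_unitInterval (hDC s hs l hl) (hr_range t ht l hl))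
    (intervalIntegrable_intervalIntegral_of_abs_le hθ.le hL.le (hD_meas.mul hr_meas)
      fun s hs l hl => abs_mul_le_of_mem_unitInterval (hDC s hs l hl) (hr_range s hs l hl))
    fun s hs u hu v hv huv => (integral_mul_sub_integral_mul_le hL.le (hDC s hs)
      (fun l hl => hsub l hl u hu v hv huv) (hDr_int s hs v hv) (hDr_int s hs u hu)
      (hr_int v hv) (hr_int u hu)).trans_eq (mul_sub _ _ _)).trans ?_
  refine forall₂_congr fun θ _ => ?_
  rw [Uag, Uag]
  constructor <;> intro h <;> linarith

/-- **Characterization of incentive compatibility for submodular retentions.** If the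
retentions `r_θ(l)` are nonincreasing in `θ` for every `l`, then the menu is incentive
compatible iff every premium satisfies the envelope formula (★). -/
theorem IC_iff_premium_formula_of_submodular
    (θlow θhigh Lbar : ℝ) (hθ : θlow < θhigh) (hL : 0 < Lbar)
    (g : ℝ → ℝ → ℝ) (F : ℝ → ℝ → ℝ)
    (hg_mono : ∀ θ ∈ Set.Icc θlow θhigh, MonotoneOn (g θ) (Set.Icc (0 : ℝ) 1))
    (hg0 : ∀ θ ∈ Set.Icc θlow θhigh, g θ 0 = 0)
    (hg1 : ∀ θ ∈ Set.Icc θlow θhigh, g θ 1 = 1)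
    (hg_range : ∀ θ ∈ Set.Icc θlow θhigh, ∀ t ∈ Set.Icc (0 : ℝ) 1,
      g θ t ∈ Set.Icc (0 : ℝ) 1)
    (hF_range : ∀ θ ∈ Set.Icc θlow θhigh, ∀ l ∈ Set.Icc (0 : ℝ) Lbar,
      F θ l ∈ Set.Icc (0 : ℝ) 1)
    (hgF_meas : Measurable fun x : ℝ × ℝ => g x.1 (F x.1 x.2))
    (r : ℝ → ℝ → ℝ) (p : ℝ → ℝ)
    (hr_meas : Measurable (Function.uncurry r)) (hp_meas : Measurable p)
    (hr_range : ∀ θ ∈ Set.Icc θlow θhigh, ∀ l ∈ Set.Icc (0 : ℝ) Lbar,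
      r θ l ∈ Set.Icc (0 : ℝ) 1)
    (D : ℝ → ℝ → ℝ)
    (hD : ∀ l ∈ Set.Icc (0 : ℝ) Lbar, ∀ s ∈ Set.Icc θlow θhigh,
      HasDerivWithinAt (fun t => g t (F t l)) (D s l) (Set.Icc θlow θhigh) s)
    (hLip : ∃ C : NNReal, ∀ l ∈ Set.Icc (0 : ℝ) Lbar,
      LipschitzOnWith C (fun s => g s (F s l)) (Set.Icc θlow θhigh))
    (hD_meas : Measurable (Function.uncurry D))
    (hD_nonpos : ∀ s ∈ Set.Icc θlow θhigh, ∀ l ∈ Set.Icc (0 : ℝ) Lbar, D s l ≤ 0)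
    -- submodularity: `r_θ(l)` is nonincreasing in `θ` for every `l`
    (hsub : ∀ l ∈ Set.Icc (0 : ℝ) Lbar, ∀ θ₁ ∈ Set.Icc θlow θhigh,
      ∀ θ₂ ∈ Set.Icc θlow θhigh, θ₁ ≤ θ₂ → r θ₂ l ≤ r θ₁ l) :
    (∀ θ ∈ Set.Icc θlow θhigh, ∀ θ' ∈ Set.Icc θlow θhigh,
        Uag g F Lbar θ (r θ') (p θ') ≤ Uag g F Lbar θ (r θ) (p θ)) ↔
      (∀ θ ∈ Set.Icc θlow θhigh,
        p θ = p θlow + (∫ l in (0 : ℝ)..Lbar, (1 - g θlow (F θlow l)) * r θlow l)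
          - (∫ s in θlow..θ, ∫ l in (0 : ℝ)..Lbar, D s l * r s l)
          - ∫ l in (0 : ℝ)..Lbar, (1 - g θ (F θ l)) * r θ l) :=
  IC_iff_premium_formula_of_submodular_general θlow θhigh Lbar hθ hL g F hg_range hF_range hgF_meas
    r p hr_meas hr_range D hD hLip hD_meas hD_nonpos hsub
end

section
/- (Proposition: individual rationality reduces to the lowest type.) Suppose the menu (r_θ, p_θ)_{θ∈Θ} is incentive compatible and ∫_Θ V_θ(r_θ, p_θ) dμ ≥ 0. Then the menu is individually rational if and only if the lowest type participates, i.e. U_{θ̲}(r_{θ̲}, p_{θ̲}) ≥ U_{θ̲}⁰. -/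
open MeasureTheory

/-- The agent's no-insurance utility: `U_θ⁰ = -∫₀^{L̄} (1 - g_θ(F_θ(l))) dl`. -/
noncomputable def U0 (g F : ℝ → ℝ → ℝ) (Lbar θ : ℝ) : ℝ :=
  -∫ l in (0 : ℝ)..Lbar, (1 - g θ (F θ l))

/-- The insurer's Yaari dual utility:
`V_θ(r, p) = p - ∫₀^{L̄} (1 - g^In(F_θ(l))) (1 - r(l)) dl`. -/
noncomputable def Vin (gIn : ℝ → ℝ) (F : ℝ → ℝ → ℝ) (Lbar θ : ℝ) (rr : ℝ → ℝ) (pp : ℝ) : ℝ :=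
  pp - ∫ l in (0 : ℝ)..Lbar, (1 - gIn (F θ l)) * (1 - rr l)

/-! The net gain `U_θ(r, p) - U_θ⁰ = -p + ∫ (1 - g_θ(F_θ)) (1 - r)` of any fixed contract is
antitone in the distorted distribution `g_θ(F_θ)`, and a nonpositive `θ`-derivative makes
`g_θ(F_θ(l))` antitone in `θ`. So type `θ` gains from the contract of the lowest type `θ̲` at
least what `θ̲` gains from it, which is nonnegative, and by incentive compatibility type `θ`
gains even more from its own contract. -/

open Set intervalIntegral

lemma intervalIntegrable_of_mem_unitInterval {f : ℝ → ℝ} {L : ℝ} (hL : 0 ≤ L)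
    (hf : Measurable f) (hf01 : ∀ l ∈ Icc 0 L, f l ∈ unitInterval) :
    IntervalIntegrable f volume 0 L := by
  refine (intervalIntegrable_const (c := (1 : ℝ))).mono_fun' hf.aestronglyMeasurable ?_
  rw [uIoc_of_le hL, Filter.EventuallyLE, ae_restrict_iff' measurableSet_Ioc]
  filter_upwards with l hl
  obtain ⟨h0, h1⟩ := hf01 l (Ioc_subset_Icc_self hl)
  rwa [Real.norm_of_nonneg h0]

lemma antitoneOn_Icc_of_hasDerivWithinAt_nonpos {f f' : ℝ → ℝ} {a b : ℝ}
    (hf : ∀ s ∈ Icc a b, HasDerivWithinAt f (f' s) (Icc a b) s)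
    (hf' : ∀ s ∈ Icc a b, f' s ≤ 0) : AntitoneOn f (Icc a b) :=
  antitoneOn_of_hasDerivWithinAt_nonpos (convex_Icc a b)
    (fun s hs => (hf s hs).continuousWithinAt)
    (fun s hs => (hf s (interior_subset hs)).mono interior_subset)
    (fun s hs => hf' s (interior_subset hs))

section NetGain

variable {g F : ℝ → ℝ → ℝ} {L : ℝ} {rr : ℝ → ℝ}

lemma Uag_sub_U0 {s : ℝ} (pp : ℝ)
    (hw : IntervalIntegrable (fun l => 1 - g s (F s l)) volume 0 L)
    (hwr : IntervalIntegrable (fun l => (1 - g s (F s l)) * rr l) volume 0 L) :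
    Uag g F L s rr pp - U0 g F L s
      = -pp + ∫ l in 0..L, (1 - g s (F s l)) * (1 - rr l) := by
  have hsplit : (∫ l in 0..L, (1 - g s (F s l)) * (1 - rr l))
      = (∫ l in 0..L, 1 - g s (F s l)) - ∫ l in 0..L, (1 - g s (F s l)) * rr l := by
    rw [← integral_sub hw hwr]
    congr 1 with l
    ring
  rw [Uag, U0, hsplit]
  ring

lemma Uag_sub_U0_le_of_le (hL : 0 ≤ L) {s t : ℝ} (pp : ℝ)
    (hs_meas : Measurable fun l => g s (F s l)) (ht_meas : Measurable fun l => g t (F t l))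
    (hs : ∀ l ∈ Icc 0 L, g s (F s l) ∈ unitInterval)
    (ht : ∀ l ∈ Icc 0 L, g t (F t l) ∈ unitInterval)
    (hrr_meas : Measurable rr) (hrr : ∀ l ∈ Icc 0 L, rr l ∈ unitInterval)
    (hts : ∀ l ∈ Icc 0 L, g t (F t l) ≤ g s (F s l)) :
    Uag g F L s rr pp - U0 g F L s ≤ Uag g F L t rr pp - U0 g F L t := by
  have hweight {u : ℝ} (hu_meas : Measurable fun l => g u (F u l))
      (hu : ∀ l ∈ Icc 0 L, g u (F u l) ∈ unitInterval) (k : ℝ → ℝ) (hk_meas : Measurable k)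
      (hk : ∀ l ∈ Icc 0 L, k l ∈ unitInterval) :
      IntervalIntegrable (fun l => (1 - g u (F u l)) * k l) volume 0 L :=
    intervalIntegrable_of_mem_unitInterval hL ((measurable_const.sub hu_meas).mul hk_meas)
      fun l hl => unitInterval.mul_mem (Icc.mem_iff_one_sub_mem.1 (hu l hl)) (hk l hl)
  have hw {u : ℝ} (hu_meas : Measurable fun l => g u (F u l))
      (hu : ∀ l ∈ Icc 0 L, g u (F u l) ∈ unitInterval) :
      IntervalIntegrable (fun l => 1 - g u (F u l)) volume 0 L := by
    simpa using hweight hu_meas hu 1 measurable_const fun _ _ => unitInterval.one_mem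
  have hco : ∀ l ∈ Icc 0 L, 1 - rr l ∈ unitInterval := fun l hl =>
    Icc.mem_iff_one_sub_mem.1 (hrr l hl)
  rw [Uag_sub_U0 pp (hw hs_meas hs) (hweight hs_meas hs rr hrr_meas hrr),
    Uag_sub_U0 pp (hw ht_meas ht) (hweight ht_meas ht rr hrr_meas hrr), add_le_add_iff_left]
  refine integral_mono_on hL (hweight hs_meas hs _ (measurable_const.sub hrr_meas) hco)
    (hweight ht_meas ht _ (measurable_const.sub hrr_meas) hco) fun l hl => ?_
  exact mul_le_mul_of_nonneg_right (sub_le_sub_left (hts l hl) 1) (hco l hl).1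

end NetGain

theorem IR_iff_lowest_type_participates_general
    (θlow θhigh Lbar : ℝ) (hθ : θlow < θhigh) (hL : 0 < Lbar)
    (g : ℝ → ℝ → ℝ) (F : ℝ → ℝ → ℝ)
    (hg_range : ∀ θ ∈ Set.Icc θlow θhigh, ∀ t ∈ Set.Icc (0 : ℝ) 1,
      g θ t ∈ Set.Icc (0 : ℝ) 1)
    (hF_range : ∀ θ ∈ Set.Icc θlow θhigh, ∀ l ∈ Set.Icc (0 : ℝ) Lbar,
      F θ l ∈ Set.Icc (0 : ℝ) 1)
    (hgF_meas : Measurable fun x : ℝ × ℝ => g x.1 (F x.1 x.2))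
    (r : ℝ → ℝ → ℝ) (p : ℝ → ℝ)
    (hr_meas : Measurable (Function.uncurry r))
    (hr_range : ∀ θ ∈ Set.Icc θlow θhigh, ∀ l ∈ Set.Icc (0 : ℝ) Lbar,
      r θ l ∈ Set.Icc (0 : ℝ) 1)
    (D : ℝ → ℝ → ℝ)
    (hD : ∀ l ∈ Set.Icc (0 : ℝ) Lbar, ∀ s ∈ Set.Icc θlow θhigh,
      HasDerivWithinAt (fun t => g t (F t l)) (D s l) (Set.Icc θlow θhigh) s)
    (hD_nonpos : ∀ s ∈ Set.Icc θlow θhigh, ∀ l ∈ Set.Icc (0 : ℝ) Lbar, D s l ≤ 0)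
    -- incentive compatibility
    (hIC : ∀ θ ∈ Set.Icc θlow θhigh, ∀ θ' ∈ Set.Icc θlow θhigh,
      Uag g F Lbar θ (r θ') (p θ') ≤ Uag g F Lbar θ (r θ) (p θ)) :
    (∀ θ ∈ Set.Icc θlow θhigh, U0 g F Lbar θ ≤ Uag g F Lbar θ (r θ) (p θ)) ↔
      U0 g F Lbar θlow ≤ Uag g F Lbar θlow (r θlow) (p θlow) := by
  have hlow : θlow ∈ Icc θlow θhigh := left_mem_Icc.2 hθ.le
  refine ⟨fun hIR => hIR θlow hlow, fun hIR_low θ hθ' => ?_⟩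
  have hanti : ∀ l ∈ Icc 0 Lbar, g θ (F θ l) ≤ g θlow (F θlow l) := fun l hl =>
    antitoneOn_Icc_of_hasDerivWithinAt_nonpos (hD l hl) (fun s hs => hD_nonpos s hs l hl)
      hlow hθ' hθ'.1
  have hgF_range : ∀ s ∈ Icc θlow θhigh, ∀ l ∈ Icc 0 Lbar, g s (F s l) ∈ unitInterval :=
    fun s hs l hl => hg_range s hs _ (hF_range s hs l hl)
  have hgain := Uag_sub_U0_le_of_le (rr := r θlow) hL.le (p θlow)
    (hgF_meas.comp measurable_prodMk_left) (hgF_meas.comp measurable_prodMk_left)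
    (hgF_range θlow hlow) (hgF_range θ hθ') (hr_meas.comp measurable_prodMk_left)
    (hr_range θlow hlow) hanti
  linarith [hIC θ hθ' θlow hlow]

/-- **Individual rationality reduces to the lowest type.** For an incentive-compatible menu
with nonnegative aggregate insurer utility, the menu is individually rational iff the lowest
type participates. -/
theorem IR_iff_lowest_type_participates
    (θlow θhigh Lbar : ℝ) (hθ : θlow < θhigh) (hL : 0 < Lbar)
    (g : ℝ → ℝ → ℝ) (gIn : ℝ → ℝ) (F : ℝ → ℝ → ℝ)
    (hg_mono : ∀ θ ∈ Set.Icc θlow θhigh, MonotoneOn (g θ) (Set.Icc (0 : ℝ) 1))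
    (hg0 : ∀ θ ∈ Set.Icc θlow θhigh, g θ 0 = 0)
    (hg1 : ∀ θ ∈ Set.Icc θlow θhigh, g θ 1 = 1)
    (hg_range : ∀ θ ∈ Set.Icc θlow θhigh, ∀ t ∈ Set.Icc (0 : ℝ) 1,
      g θ t ∈ Set.Icc (0 : ℝ) 1)
    (hgIn_mono : MonotoneOn gIn (Set.Icc (0 : ℝ) 1))
    (hgIn0 : gIn 0 = 0) (hgIn1 : gIn 1 = 1)
    (hgIn_range : ∀ t ∈ Set.Icc (0 : ℝ) 1, gIn t ∈ Set.Icc (0 : ℝ) 1)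
    (hF_range : ∀ θ ∈ Set.Icc θlow θhigh, ∀ l ∈ Set.Icc (0 : ℝ) Lbar,
      F θ l ∈ Set.Icc (0 : ℝ) 1)
    (hgF_meas : Measurable fun x : ℝ × ℝ => g x.1 (F x.1 x.2))
    (hgInF_meas : Measurable fun x : ℝ × ℝ => gIn (F x.1 x.2))
    (r : ℝ → ℝ → ℝ) (p : ℝ → ℝ)
    (hr_meas : Measurable (Function.uncurry r)) (hp_meas : Measurable p)
    (hr_range : ∀ θ ∈ Set.Icc θlow θhigh, ∀ l ∈ Set.Icc (0 : ℝ) Lbar,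
      r θ l ∈ Set.Icc (0 : ℝ) 1)
    (q : ℝ → ℝ) (hq_nonneg : ∀ θ, 0 ≤ q θ) (hq_meas : Measurable q)
    (hq_int : (∫ θ in θlow..θhigh, q θ) = 1)
    (D : ℝ → ℝ → ℝ)
    (hD : ∀ l ∈ Set.Icc (0 : ℝ) Lbar, ∀ s ∈ Set.Icc θlow θhigh,
      HasDerivWithinAt (fun t => g t (F t l)) (D s l) (Set.Icc θlow θhigh) s)
    (hLip : ∃ C : NNReal, ∀ l ∈ Set.Icc (0 : ℝ) Lbar,
      LipschitzOnWith C (fun s => g s (F s l)) (Set.Icc θlow θhigh))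
    (hD_meas : Measurable (Function.uncurry D))
    (hD_nonpos : ∀ s ∈ Set.Icc θlow θhigh, ∀ l ∈ Set.Icc (0 : ℝ) Lbar, D s l ≤ 0)
    -- incentive compatibility
    (hIC : ∀ θ ∈ Set.Icc θlow θhigh, ∀ θ' ∈ Set.Icc θlow θhigh,
      Uag g F Lbar θ (r θ') (p θ') ≤ Uag g F Lbar θ (r θ) (p θ))
    -- nonnegative aggregate insurer utility
    (hV : 0 ≤ ∫ θ in θlow..θhigh, Vin gIn F Lbar θ (r θ) (p θ) * q θ) :
    (∀ θ ∈ Set.Icc θlow θhigh, U0 g F Lbar θ ≤ Uag g F Lbar θ (r θ) (p θ)) ↔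
      U0 g F Lbar θlow ≤ Uag g F Lbar θlow (r θlow) (p θlow) :=
  IR_iff_lowest_type_participates_general θlow θhigh Lbar hθ hL g F hg_range hF_range hgF_meas r p
    hr_meas hr_range D hD hD_nonpos hIC
end

section
/- (Social welfare identity, equation (eq:social_welfare).) Let α ∈ ℝ. Suppose the menu's premia satisfy the premium formula (★): p_θ = p_{θ̲} + ∫₀^{L̄} (1 − g_{θ̲}(F_{θ̲}(l))) r_{θ̲}(l) dl − ∫_{θ̲}^{θ} ∫₀^{L̄} D(s,l) r_s(l) dl ds − ∫₀^{L̄} (1 − g_θ(F_θ(l))) r_θ(l) dl for every θ ∈ Θ. Then the social welfare W_{η,α} := α ∫_Θ U_θ(r_θ, p_θ) q_η(θ) dθ + (1−α) ∫_Θ V_θ(r_θ, p_θ) q(θ) dθ satisfies the identity W_{η,α} = (1−2α) ( p_{θ̲} + ∫₀^{L̄} (1 − g_{θ̲}(F_{θ̲}(l))) r_{θ̲}(l) dl ) − ∫_Θ ∫₀^{L̄} K_θ(l) r_θ(l) dl dθ − (1−α) ∫_Θ ∫₀^{L̄} (1 − g^In(F_θ(l))) q(θ) dl dθ, where K_θ(l)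 := (1−α)(g^In(F_θ(l)) − g_θ(F_θ(l))) q(θ) + D(θ,l) ((1−α) Q̄(θ) − α Q̄_η(θ)). -/
open MeasureTheory

/-!
Substituting the premium formula (★) gives `U_θ = -c + ∫_{θ̲}^θ B` and
`V_θ = c - ∫_{θ̲}^θ B - ∫ (1 - g_θ(F_θ)) r_θ - ∫ (1 - g^In(F_θ)) + ∫ (1 - g^In(F_θ)) r_θ`, where
`c = p_{θ̲} + ∫ (1 - g_{θ̲}(F_{θ̲})) r_{θ̲}` and `B(s) = ∫ D(s,l) r_s(l) dl`. Integrating against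
a density `w` and exchanging the order of integration over the triangle `s ≤ θ` turns
`∫ (∫_{θ̲}^θ B) w(θ) dθ` into `∫ B(s) (∫_s^{θ̄} w) ds`, which produces the `Q̄` and `Q̄_η` terms of
`K_θ`; everything else is linearity together with `∫ q = ∫ q_η = 1`. Integrability comes from
boundedness: the common Lipschitz constant bounds the derivative `D`, and all other integrands
take values in `[0, 1]`.
-/

open Set Filter Topology
open scoped Interval

theorem HasDerivWithinAt.norm_le_of_lipschitzOn {F : Type*} [NormedAddCommGroup F]
    [NormedSpace ℝ F] {f : ℝ → F} {f' : F} {s : Set ℝ} {x : ℝ} {C : NNReal}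
    (hf : HasDerivWithinAt f f' s x) (hx : AccPt x (𝓟 s)) (hxs : x ∈ s)
    (hlip : LipschitzOnWith C f s) : ‖f'‖ ≤ C := by
  have : (𝓝[s \ {x}] x).NeBot := accPt_principal_iff_nhdsWithin.mp hx
  refine le_of_tendsto (hasDerivWithinAt_iff_tendsto_slope.mp hf).norm ?_
  filter_upwards [self_mem_nhdsWithin] with y ⟨hys, hyx⟩
  have hyx' : 0 < ‖y - x‖ := norm_pos_iff.2 (sub_ne_zero.2 hyx)
  rw [slope_def_module, norm_smul, norm_inv, inv_mul_le_iff₀ hyx', mul_comm]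
  simpa [dist_eq_norm] using hlip.dist_le_mul y hys x hxs

theorem IntervalIntegrable.of_norm_le {E : Type*} [NormedAddCommGroup E] {f : ℝ → E}
    {a b M : ℝ} (hf : AEStronglyMeasurable f (volume.restrict (Ι a b)))
    (hM : ∀ x ∈ Ι a b, ‖f x‖ ≤ M) : IntervalIntegrable f volume a b :=
  intervalIntegrable_iff.2 <| IntegrableOn.of_bound (by simp [Real.volume_uIoc]) hf M <|
    (ae_restrict_iff' measurableSet_uIoc).2 (ae_of_all _ hM)

theorem Measurable.intervalIntegral_prod_right_s9 {f : ℝ → ℝ → ℝ}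
    (hf : Measurable (Function.uncurry f)) (c d : ℝ) :
    Measurable fun x => ∫ y in c..d, f x y :=
  (hf.stronglyMeasurable.integral_prod_right' (ν := volume.restrict (Ioc c d))).measurable.sub
    (hf.stronglyMeasurable.integral_prod_right' (ν := volume.restrict (Ioc d c))).measurable

def IsBoundedKernel (k : ℝ → ℝ → ℝ) (s t : Set ℝ) : Prop :=
  Measurable (Function.uncurry k) ∧ ∃ M, ∀ x ∈ s, ∀ y ∈ t, ‖k x y‖ ≤ M

namespace IsBoundedKernel

variable {k ρ : ℝ → ℝ → ℝ} {s t : Set ℝ}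

theorem of_mem_Icc (hk : Measurable (Function.uncurry k))
    (h : ∀ x ∈ s, ∀ y ∈ t, k x y ∈ Icc (0 : ℝ) 1) : IsBoundedKernel k s t :=
  ⟨hk, 1, fun x hx y hy => by
    rw [Real.norm_of_nonneg (h x hx y hy).1]
    exact (h x hx y hy).2⟩

theorem one_sub (hk : IsBoundedKernel k s t) : IsBoundedKernel (fun x y => 1 - k x y) s t := by
  obtain ⟨hm, M, hM⟩ := hk
  refine ⟨measurable_const.sub hm, 1 + M, fun x hx y hy => ?_⟩
  calc ‖1 - k x y‖ ≤ ‖(1 : ℝ)‖ + ‖k x y‖ := norm_sub_le _ _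
    _ ≤ 1 + M := by rw [norm_one]; exact add_le_add_right (hM x hx y hy) 1

theorem mul (hk : IsBoundedKernel k s t) (hρ : IsBoundedKernel ρ s t) :
    IsBoundedKernel (fun x y => k x y * ρ x y) s t := by
  obtain ⟨hkm, M, hM⟩ := hk
  obtain ⟨hρm, N, hN⟩ := hρ
  exact ⟨hkm.mul hρm, M * N, fun x hx y hy => norm_mul_le_of_le (hM x hx y hy) (hN x hx y hy)⟩

variable {a b c d : ℝ}

theorem intervalIntegrable_section (hk : IsBoundedKernel k [[a, b]] [[c, d]]) {x : ℝ}
    (hx : x ∈ [[a, b]]) : IntervalIntegrable (k x) volume c d := by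
  obtain ⟨hm, M, hM⟩ := hk
  exact .of_norm_le (hm.comp measurable_prodMk_left).aestronglyMeasurable fun y hy =>
    hM x hx y (uIoc_subset_uIcc hy)

theorem intervalIntegrable_integral (hk : IsBoundedKernel k [[a, b]] [[c, d]]) :
    IntervalIntegrable (fun x => ∫ y in c..d, k x y) volume a b := by
  obtain ⟨hm, M, hM⟩ := hk
  exact .of_norm_le (hm.intervalIntegral_prod_right_s9 c d).aestronglyMeasurable fun x hx =>
    intervalIntegral.norm_integral_le_of_norm_le_const fun y hy =>
      hM x (uIoc_subset_uIcc hx) y (uIoc_subset_uIcc hy)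

end IsBoundedKernel

theorem intervalIntegral_indicator_Ici {E : Type*} [NormedAddCommGroup E] [NormedSpace ℝ E]
    {f : ℝ → E} {a b c : ℝ} (hc : c ∈ Ioc a b) :
    ∫ x in a..b, (Ici c).indicator f x = ∫ x in c..b, f x := by
  rw [intervalIntegral.integral_of_le (hc.1.le.trans hc.2), intervalIntegral.integral_of_le hc.2,
    MeasureTheory.integral_indicator measurableSet_Ici, Measure.restrict_restrict measurableSet_Ici,
    ← integral_Icc_eq_integral_Ioc]
  congr 2
  ext x
  simp only [mem_inter_iff, mem_Ici, mem_Ioc, mem_Icc]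
  constructor
  · rintro ⟨h1, -, h2⟩
    exact ⟨h1, h2⟩
  · rintro ⟨h1, h2⟩
    exact ⟨h1, hc.1.trans_le h1, h2⟩

theorem integral_primitive_mul_eq {B w : ℝ → ℝ} {a b : ℝ} (hab : a ≤ b)
    (hB : IntervalIntegrable B volume a b) (hw : IntervalIntegrable w volume a b) :
    ∫ θ in a..b, (∫ s in a..θ, B s) * w θ = ∫ s in a..b, B s * ∫ θ in s..b, w θ := by
  set G : ℝ → ℝ → ℝ := fun θ s => {s' | s' ≤ θ}.indicator B s * w θ
  have hG : IntegrableOn (Function.uncurry G) (Ι a b ×ˢ Ι a b) := by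
    have h := ((intervalIntegrable_iff.1 hw).mul_prod (intervalIntegrable_iff.1 hB)).indicator
      (measurableSet_le measurable_snd measurable_fst)
    rw [IntegrableOn, Measure.volume_eq_prod, ← Measure.prod_restrict]
    refine h.congr (ae_of_all _ fun ⟨θ, s⟩ => ?_)
    by_cases hsθ : s ≤ θ <;> simp [G, hsθ, mul_comm]
  calc ∫ θ in a..b, (∫ s in a..θ, B s) * w θ = ∫ θ in a..b, ∫ s in a..b, G θ s := by
        refine intervalIntegral.integral_congr fun θ hθ => ?_
        rw [uIcc_of_le hab] at hθ
        simp only [G, intervalIntegral.integral_mul_const, intervalIntegral.integral_indicator hθ]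
    _ = ∫ s in a..b, ∫ θ in a..b, G θ s := intervalIntegral_intervalIntegral_swap hG
    _ = ∫ s in a..b, B s * ∫ θ in s..b, w θ := by
        refine intervalIntegral.integral_congr_ae (ae_of_all _ fun s hs => ?_)
        rw [uIoc_of_le hab] at hs
        rw [← intervalIntegral_indicator_Ici hs, ← intervalIntegral.integral_const_mul]
        congr 1 with θ
        by_cases hsθ : s ≤ θ <;> simp [G, hsθ]

theorem integral_K_eq {a b α : ℝ} {A E B q qη K : ℝ → ℝ}
    (hA : IntervalIntegrable A volume a b) (hE : IntervalIntegrable E volume a b)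
    (hB : IntervalIntegrable B volume a b)
    (hq : ContinuousOn q [[a, b]]) (hqη : ContinuousOn qη [[a, b]])
    (hK : ∀ θ ∈ [[a, b]], K θ = (1 - α) * (A θ - E θ) * q θ +
      B θ * ((1 - α) * (∫ s in θ..b, q s) - α * (∫ s in θ..b, qη s))) :
    ∫ θ in a..b, K θ = (1 - α) * (∫ θ in a..b, (A θ - E θ) * q θ) +
      (1 - α) * (∫ θ in a..b, B θ * ∫ s in θ..b, q s) -
      α * ∫ θ in a..b, B θ * ∫ s in θ..b, qη s := by
  have htail {w : ℝ → ℝ} (hw : ContinuousOn w [[a, b]]) :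
      ContinuousOn (fun θ => ∫ s in θ..b, w s) [[a, b]] :=
    intervalIntegral.continuousOn_primitive_interval_left (hw.integrableOn_compact isCompact_uIcc)
  have hAEq := ((hA.sub hE).mul_continuousOn hq).const_mul (1 - α)
  have hBQ := (hB.mul_continuousOn (htail hq)).const_mul (1 - α)
  have hBQη := (hB.mul_continuousOn (htail hqη)).const_mul α
  rw [intervalIntegral.integral_congr (g := fun θ => (1 - α) * ((A θ - E θ) * q θ) +
      (1 - α) * (B θ * ∫ s in θ..b, q s) - α * (B θ * ∫ s in θ..b, qη s)) fun θ hθ => by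
        simp only [hK θ hθ]; ring,
    intervalIntegral.integral_sub (hAEq.add hBQ) hBQη, intervalIntegral.integral_add hAEq hBQ,
    intervalIntegral.integral_const_mul, intervalIntegral.integral_const_mul,
    intervalIntegral.integral_const_mul]

theorem welfare_integral_eq {a b α c : ℝ} {A E T B q qη : ℝ → ℝ} (hab : a ≤ b)
    (hA : IntervalIntegrable A volume a b) (hE : IntervalIntegrable E volume a b)
    (hT : IntervalIntegrable T volume a b) (hB : IntervalIntegrable B volume a b)
    (hq : ContinuousOn q [[a, b]]) (hqη : ContinuousOn qη [[a, b]])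
    (hq1 : ∫ s in a..b, q s = 1) (hqη1 : ∫ s in a..b, qη s = 1) {U V K : ℝ → ℝ}
    (hU : ∀ θ ∈ [[a, b]], U θ = -c + ∫ s in a..θ, B s)
    (hV : ∀ θ ∈ [[a, b]], V θ = c - (∫ s in a..θ, B s) - A θ - T θ + E θ)
    (hK : ∀ θ ∈ [[a, b]], K θ = (1 - α) * (A θ - E θ) * q θ +
      B θ * ((1 - α) * (∫ s in θ..b, q s) - α * (∫ s in θ..b, qη s))) :
    α * (∫ θ in a..b, U θ * qη θ) + (1 - α) * (∫ θ in a..b, V θ * q θ) =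
      (1 - 2 * α) * c - (∫ θ in a..b, K θ) - (1 - α) * ∫ θ in a..b, T θ * q θ := by
  set I := fun θ => ∫ s in a..θ, B s
  have hI : ContinuousOn I [[a, b]] :=
    intervalIntegral.continuousOn_primitive_interval' hB left_mem_uIcc
  have hIq : IntervalIntegrable (fun θ => I θ * q θ) volume a b :=
    (hI.mul hq).intervalIntegrable
  have hIqη : IntervalIntegrable (fun θ => I θ * qη θ) volume a b :=
    (hI.mul hqη).intervalIntegrable
  have hcq := (hq.intervalIntegrable (μ := volume)).const_mul c
  have hcqη := (hqη.intervalIntegrable (μ := volume)).const_mul c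
  have hAEq := (hA.sub hE).mul_continuousOn hq
  have hTq := hT.mul_continuousOn hq
  have hUq : ∫ θ in a..b, U θ * qη θ = (∫ θ in a..b, I θ * qη θ) - c := by
    rw [intervalIntegral.integral_congr (g := fun θ => I θ * qη θ - c * qη θ) fun θ hθ => by
        simp only [hU θ hθ]; ring,
      intervalIntegral.integral_sub hIqη hcqη, intervalIntegral.integral_const_mul, hqη1,
      mul_one]
  have hVq : ∫ θ in a..b, V θ * q θ = c - (∫ θ in a..b, I θ * q θ) -
      (∫ θ in a..b, (A θ - E θ) * q θ) - ∫ θ in a..b, T θ * q θ := by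
    rw [intervalIntegral.integral_congr (g := fun θ =>
        c * q θ - I θ * q θ - (A θ - E θ) * q θ - T θ * q θ) fun θ hθ => by
          simp only [hV θ hθ]; ring,
      intervalIntegral.integral_sub ((hcq.sub hIq).sub hAEq) hTq,
      intervalIntegral.integral_sub (hcq.sub hIq) hAEq, intervalIntegral.integral_sub hcq hIq,
      intervalIntegral.integral_const_mul, hq1, mul_one]
  rw [hUq, hVq, integral_K_eq hA hE hB hq hqη hK,
    integral_primitive_mul_eq hab hB hq.intervalIntegrable,
    integral_primitive_mul_eq hab hB hqη.intervalIntegrable]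
  ring

theorem Vin_eq_sub_add {gIn : ℝ → ℝ} {F : ℝ → ℝ → ℝ} {Lbar θ : ℝ} {rr : ℝ → ℝ} (pp : ℝ)
    (h1 : IntervalIntegrable (fun l => 1 - gIn (F θ l)) volume 0 Lbar)
    (h2 : IntervalIntegrable (fun l => (1 - gIn (F θ l)) * rr l) volume 0 Lbar) :
    Vin gIn F Lbar θ rr pp = pp - (∫ l in (0 : ℝ)..Lbar, 1 - gIn (F θ l)) +
      ∫ l in (0 : ℝ)..Lbar, (1 - gIn (F θ l)) * rr l := by
  have h : ∀ l, (1 - gIn (F θ l)) * (1 - rr l) = (1 - gIn (F θ l)) - (1 - gIn (F θ l)) * rr l :=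
    fun l => by ring
  rw [Vin, funext h, intervalIntegral.integral_sub h1 h2]
  ring

theorem integral_distortion_gap_add_mul {G H D ρ : ℝ → ℝ} {c d : ℝ} (x y z : ℝ)
    (hG : IntervalIntegrable (fun l => (1 - G l) * ρ l) volume c d)
    (hH : IntervalIntegrable (fun l => (1 - H l) * ρ l) volume c d)
    (hD : IntervalIntegrable (fun l => D l * ρ l) volume c d) :
    ∫ l in c..d, (x * (H l - G l) * y + D l * z) * ρ l =
      x * ((∫ l in c..d, (1 - G l) * ρ l) - ∫ l in c..d, (1 - H l) * ρ l) * y +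
        (∫ l in c..d, D l * ρ l) * z := by
  have h : ∀ l, (x * (H l - G l) * y + D l * z) * ρ l =
      x * y * ((1 - G l) * ρ l - (1 - H l) * ρ l) + z * (D l * ρ l) := fun l => by ring
  rw [funext h, intervalIntegral.integral_add ((hG.sub hH).const_mul _) (hD.const_mul _),
    intervalIntegral.integral_const_mul, intervalIntegral.integral_const_mul,
    intervalIntegral.integral_sub hG hH]
  ring

theorem social_welfare_identity_general
    (θlow θhigh Lbar : ℝ) (hθ : θlow < θhigh) (hL : 0 < Lbar)
    (g : ℝ → ℝ → ℝ) (gIn : ℝ → ℝ) (F : ℝ → ℝ → ℝ)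
    (hg_range : ∀ θ ∈ Set.Icc θlow θhigh, ∀ t ∈ Set.Icc (0 : ℝ) 1,
      g θ t ∈ Set.Icc (0 : ℝ) 1)
    (hgIn_range : ∀ t ∈ Set.Icc (0 : ℝ) 1, gIn t ∈ Set.Icc (0 : ℝ) 1)
    (hF_range : ∀ θ ∈ Set.Icc θlow θhigh, ∀ l ∈ Set.Icc (0 : ℝ) Lbar,
      F θ l ∈ Set.Icc (0 : ℝ) 1)
    (hgF_meas : Measurable fun x : ℝ × ℝ => g x.1 (F x.1 x.2))
    (hgInF_meas : Measurable fun x : ℝ × ℝ => gIn (F x.1 x.2))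
    (r : ℝ → ℝ → ℝ) (p : ℝ → ℝ)
    (hr_meas : Measurable (Function.uncurry r))
    (hr_range : ∀ θ ∈ Set.Icc θlow θhigh, ∀ l ∈ Set.Icc (0 : ℝ) Lbar,
      r θ l ∈ Set.Icc (0 : ℝ) 1)
    (q qη : ℝ → ℝ)
    (hq_cont : ContinuousOn q (Set.Icc θlow θhigh))
    (hqη_cont : ContinuousOn qη (Set.Icc θlow θhigh))
    (hq_int : (∫ s in θlow..θhigh, q s) = 1)
    (hqη_int : (∫ s in θlow..θhigh, qη s) = 1)
    (D : ℝ → ℝ → ℝ)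
    (hD : ∀ l ∈ Set.Icc (0 : ℝ) Lbar, ∀ s ∈ Set.Icc θlow θhigh,
      HasDerivWithinAt (fun t => g t (F t l)) (D s l) (Set.Icc θlow θhigh) s)
    (hLip : ∃ C : NNReal, ∀ l ∈ Set.Icc (0 : ℝ) Lbar,
      LipschitzOnWith C (fun s => g s (F s l)) (Set.Icc θlow θhigh))
    (hD_meas : Measurable (Function.uncurry D))
    (α : ℝ)
    -- the premium formula (★)
    (hstar : ∀ θ ∈ Set.Icc θlow θhigh,
      p θ = p θlow + (∫ l in (0 : ℝ)..Lbar, (1 - g θlow (F θlow l)) * r θlow l)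
        - (∫ s in θlow..θ, ∫ l in (0 : ℝ)..Lbar, D s l * r s l)
        - ∫ l in (0 : ℝ)..Lbar, (1 - g θ (F θ l)) * r θ l) :
    α * (∫ θ in θlow..θhigh, Uag g F Lbar θ (r θ) (p θ) * qη θ) +
        (1 - α) * (∫ θ in θlow..θhigh, Vin gIn F Lbar θ (r θ) (p θ) * q θ) =
      (1 - 2 * α) *
          (p θlow + ∫ l in (0 : ℝ)..Lbar, (1 - g θlow (F θlow l)) * r θlow l) -
        (∫ θ in θlow..θhigh, ∫ l in (0 : ℝ)..Lbar,
          ((1 - α) * (gIn (F θ l) - g θ (F θ l)) * q θ +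
            D θ l * ((1 - α) * (∫ s in θ..θhigh, q s) -
              α * (∫ s in θ..θhigh, qη s))) * r θ l) -
        (1 - α) * ∫ θ in θlow..θhigh, ∫ l in (0 : ℝ)..Lbar,
          (1 - gIn (F θ l)) * q θ := by
  obtain ⟨C, hC⟩ := hLip
  have hΘ : [[θlow, θhigh]] = Icc θlow θhigh := uIcc_of_le hθ.le
  have hΛ : [[0, Lbar]] = Icc 0 Lbar := uIcc_of_le hL.le
  have hr : IsBoundedKernel r [[θlow, θhigh]] [[0, Lbar]] :=
    .of_mem_Icc hr_meas (by rw [hΘ, hΛ]; exact hr_range)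
  have hg : IsBoundedKernel (fun θ l => 1 - g θ (F θ l)) [[θlow, θhigh]] [[0, Lbar]] :=
    (IsBoundedKernel.of_mem_Icc (k := fun θ l => g θ (F θ l)) hgF_meas (by
      rw [hΘ, hΛ]; exact fun θ hθ l hl => hg_range θ hθ _ (hF_range θ hθ l hl))).one_sub
  have hgIn : IsBoundedKernel (fun θ l => 1 - gIn (F θ l)) [[θlow, θhigh]] [[0, Lbar]] :=
    (IsBoundedKernel.of_mem_Icc (k := fun θ l => gIn (F θ l)) hgInF_meas (by
      rw [hΘ, hΛ]; exact fun θ hθ l hl => hgIn_range _ (hF_range θ hθ l hl))).one_sub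
  have hDk : IsBoundedKernel D [[θlow, θhigh]] [[0, Lbar]] := ⟨hD_meas, C, by
    rw [hΘ, hΛ]
    exact fun s hs l hl => (hD l hl s hs).norm_le_of_lipschitzOn
      (uniqueDiffOn_Icc hθ s hs).accPt hs (hC l hl)⟩
  rw [← hΘ] at hq_cont hqη_cont hstar
  simp only [intervalIntegral.integral_mul_const]
  refine welfare_integral_eq hθ.le (hg.mul hr).intervalIntegrable_integral
    (hgIn.mul hr).intervalIntegrable_integral hgIn.intervalIntegrable_integral
    (hDk.mul hr).intervalIntegrable_integral hq_cont hqη_cont hq_int hqη_int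
    (fun θ hθ => ?_) (fun θ hθ => ?_) (fun θ hθ => ?_)
  · rw [Uag, hstar θ hθ]
    ring
  · rw [Vin_eq_sub_add _ (hgIn.intervalIntegrable_section hθ)
      ((hgIn.mul hr).intervalIntegrable_section hθ), hstar θ hθ]
  · exact integral_distortion_gap_add_mul _ _ _ ((hg.mul hr).intervalIntegrable_section hθ)
      ((hgIn.mul hr).intervalIntegrable_section hθ) ((hDk.mul hr).intervalIntegrable_section hθ)

/-- **Social welfare identity (eq:social_welfare).** If the premia satisfy the envelope
formula (★), then `W_{η,α} = (1−2α)(p_{θ̲} + ∫ (1−g_{θ̲}(F_{θ̲})) r_{θ̲})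
− ∫_Θ ∫₀^{L̄} K_θ(l) r_θ(l) dl dθ − (1−α) ∫_Θ ∫₀^{L̄} (1−g^In(F_θ(l))) q(θ) dl dθ`. -/
theorem social_welfare_identity
    (θlow θhigh Lbar : ℝ) (hθ : θlow < θhigh) (hL : 0 < Lbar)
    (g : ℝ → ℝ → ℝ) (gIn : ℝ → ℝ) (F : ℝ → ℝ → ℝ)
    (hg_mono : ∀ θ ∈ Set.Icc θlow θhigh, MonotoneOn (g θ) (Set.Icc (0 : ℝ) 1))
    (hg0 : ∀ θ ∈ Set.Icc θlow θhigh, g θ 0 = 0)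
    (hg1 : ∀ θ ∈ Set.Icc θlow θhigh, g θ 1 = 1)
    (hg_range : ∀ θ ∈ Set.Icc θlow θhigh, ∀ t ∈ Set.Icc (0 : ℝ) 1,
      g θ t ∈ Set.Icc (0 : ℝ) 1)
    (hgIn_mono : MonotoneOn gIn (Set.Icc (0 : ℝ) 1))
    (hgIn0 : gIn 0 = 0) (hgIn1 : gIn 1 = 1)
    (hgIn_range : ∀ t ∈ Set.Icc (0 : ℝ) 1, gIn t ∈ Set.Icc (0 : ℝ) 1)
    (hF_range : ∀ θ ∈ Set.Icc θlow θhigh, ∀ l ∈ Set.Icc (0 : ℝ) Lbar,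
      F θ l ∈ Set.Icc (0 : ℝ) 1)
    (hgF_meas : Measurable fun x : ℝ × ℝ => g x.1 (F x.1 x.2))
    (hgInF_meas : Measurable fun x : ℝ × ℝ => gIn (F x.1 x.2))
    (r : ℝ → ℝ → ℝ) (p : ℝ → ℝ)
    (hr_meas : Measurable (Function.uncurry r)) (hp_meas : Measurable p)
    (hr_range : ∀ θ ∈ Set.Icc θlow θhigh, ∀ l ∈ Set.Icc (0 : ℝ) Lbar,
      r θ l ∈ Set.Icc (0 : ℝ) 1)
    (q qη : ℝ → ℝ)
    (hq_cont : ContinuousOn q (Set.Icc θlow θhigh))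
    (hqη_cont : ContinuousOn qη (Set.Icc θlow θhigh))
    (hq_nonneg : ∀ θ ∈ Set.Icc θlow θhigh, 0 ≤ q θ)
    (hqη_nonneg : ∀ θ ∈ Set.Icc θlow θhigh, 0 ≤ qη θ)
    (hq_int : (∫ s in θlow..θhigh, q s) = 1)
    (hqη_int : (∫ s in θlow..θhigh, qη s) = 1)
    (D : ℝ → ℝ → ℝ)
    (hD : ∀ l ∈ Set.Icc (0 : ℝ) Lbar, ∀ s ∈ Set.Icc θlow θhigh,
      HasDerivWithinAt (fun t => g t (F t l)) (D s l) (Set.Icc θlow θhigh) s)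
    (hLip : ∃ C : NNReal, ∀ l ∈ Set.Icc (0 : ℝ) Lbar,
      LipschitzOnWith C (fun s => g s (F s l)) (Set.Icc θlow θhigh))
    (hD_meas : Measurable (Function.uncurry D))
    (α : ℝ)
    -- the premium formula (★)
    (hstar : ∀ θ ∈ Set.Icc θlow θhigh,
      p θ = p θlow + (∫ l in (0 : ℝ)..Lbar, (1 - g θlow (F θlow l)) * r θlow l)
        - (∫ s in θlow..θ, ∫ l in (0 : ℝ)..Lbar, D s l * r s l)
        - ∫ l in (0 : ℝ)..Lbar, (1 - g θ (F θ l)) * r θ l) :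
    α * (∫ θ in θlow..θhigh, Uag g F Lbar θ (r θ) (p θ) * qη θ) +
        (1 - α) * (∫ θ in θlow..θhigh, Vin gIn F Lbar θ (r θ) (p θ) * q θ) =
      (1 - 2 * α) *
          (p θlow + ∫ l in (0 : ℝ)..Lbar, (1 - g θlow (F θlow l)) * r θlow l) -
        (∫ θ in θlow..θhigh, ∫ l in (0 : ℝ)..Lbar,
          ((1 - α) * (gIn (F θ l) - g θ (F θ l)) * q θ +
            D θ l * ((1 - α) * (∫ s in θ..θhigh, q s) -
              α * (∫ s in θ..θhigh, qη s))) * r θ l) -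
        (1 - α) * ∫ θ in θlow..θhigh, ∫ l in (0 : ℝ)..Lbar,
          (1 - gIn (F θ l)) * q θ :=
  social_welfare_identity_general θlow θhigh Lbar hθ hL g gIn F hg_range hgIn_range hF_range
    hgF_meas hgInF_meas r p hr_meas hr_range q qη hq_cont hqη_cont hq_int hqη_int D hD hLip hD_meas
    α hstar
end

section
/- (Proposition: insurer's aggregate utility under incentive compatibility, equation (eq:barV).) Suppose the menu's premia satisfy the premium formula (★): p_θ = p_{θ̲} + ∫₀^{L̄} (1 − g_{θ̲}(F_{θ̲}(l))) r_{θ̲}(l) dl − ∫_{θ̲}^{θ} ∫₀^{L̄} D(s,l) r_s(l) dl ds − ∫₀^{L̄} (1 − g_θ(F_θ(l))) r_θ(l) dl for every θ ∈ Θ. Then the insurer's total utility satisfies ∫_Θ V_θ(r_θ, p_θ) q(θ) dθ = p_{θ̲} + ∫₀^{L̄} (1 − g_{θ̲}(F_{θ̲}(l))) r_{θ̲}(l) dl − ∫_Θ ∫₀^{L̄} (1 − g^In(F_θ(l))) q(θ) dl dθ − ∫_Θ ∫₀^{L̄} [ (g^In(F_θ(l)) − g_θ(F_θ(l))) q(θ)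 + D(θ,l) Q̄(θ) ] r_θ(l) dl dθ. -/
/-!
Substituting (★) into `V_θ`, the two retention integrals merge pointwise, since
`(1 - g_θ) r + (1 - g^In) (1 - r) = (1 - g^In) + (g^In - g_θ) r`. What is left is
`∫_Θ (∫_{θ̲}^θ φ) q` with `φ s = ∫₀^{L̄} D(s,l) r_s(l) dl`; integrating by parts against
`Q̄` (absolutely continuous, `Q̄' = -q` a.e., `Q̄(θ̄) = 0`) turns it into `∫_Θ φ Q̄`.
The common Lipschitz constant bounds `D`, which is what makes every integrand integrable.
-/

open MeasureTheory

open Set Filter Function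
open scoped Interval

theorem HasDerivWithinAt.norm_le_of_lipschitzOnWith {𝕜 F : Type*} [NontriviallyNormedField 𝕜]
    [NormedAddCommGroup F] [NormedSpace 𝕜 F] {f : 𝕜 → F} {f' : F} {s : Set 𝕜} {x : 𝕜}
    {C : NNReal} (hf : HasDerivWithinAt f f' s x) (hx : x ∈ s) (hacc : AccPt x (𝓟 s))
    (hlip : LipschitzOnWith C f s) : ‖f'‖ ≤ C := by
  rw [hasDerivWithinAt_iff_tendsto_slope] at hf
  have := accPt_principal_iff_nhdsWithin.mp hacc
  refine le_of_tendsto hf.norm (eventually_mem_nhdsWithin.mono fun y hy => ?_)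
  rw [slope_def_module, norm_smul, norm_inv,
    inv_mul_le_iff₀ (norm_pos_iff.2 (sub_ne_zero.2 hy.2))]
  exact (hlip.norm_sub_le hy.1 hx).trans_eq (mul_comm _ _)

theorem intervalIntegral.integral_primitive_mul_eq_integral_mul_integral {φ q : ℝ → ℝ}
    {a b : ℝ} (hφ : IntervalIntegrable φ volume a b) (hq : IntervalIntegrable q volume a b) :
    ∫ θ in a..b, (∫ s in a..θ, φ s) * q θ = ∫ s in a..b, φ s * ∫ t in s..b, q t := by
  set Φ := fun x => ∫ s in a..x, φ s
  set Q := fun x => ∫ t in b..x, q t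
  have hΦ := hφ.absolutelyContinuousOnInterval_intervalIntegral (left_mem_uIcc (a := a))
  have hQ := hq.absolutelyContinuousOnInterval_intervalIntegral (right_mem_uIcc (b := b))
  have hderivΦ : ∀ᵐ x, x ∈ Ι a b → deriv Φ x = φ x := by
    filter_upwards [hφ.ae_hasDerivAt_integral] with x hx hxab
    exact (hx (uIoc_subset_uIcc hxab) a left_mem_uIcc).deriv
  have hderivQ : ∀ᵐ x, x ∈ Ι a b → deriv Q x = q x := by
    filter_upwards [hq.ae_hasDerivAt_integral] with x hx hxab
    exact (hx (uIoc_subset_uIcc hxab) b right_mem_uIcc).deriv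
  calc ∫ θ in a..b, Φ θ * q θ
      = ∫ θ in a..b, Φ θ * deriv Q θ :=
        integral_congr_ae (hderivQ.mono fun x hx hxab => by rw [hx hxab])
    _ = Φ b * Q b - Φ a * Q a - ∫ s in a..b, deriv Φ s * Q s :=
        hΦ.integral_mul_deriv_eq_deriv_mul hQ
    _ = -∫ s in a..b, φ s * Q s := by
        rw [integral_congr_ae (hderivΦ.mono fun x hx hxab => by rw [hx hxab])]
        simp only [Φ, Q, integral_same, zero_mul, mul_zero, sub_zero, zero_sub]
    _ = ∫ s in a..b, φ s * ∫ t in s..b, q t := by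
        simp only [Q, integral_symm b, mul_neg, intervalIntegral.integral_neg, neg_neg]

def BoundedMeasurableOn (f : ℝ → ℝ → ℝ) (s : Set (ℝ × ℝ)) : Prop :=
  Measurable (uncurry f) ∧ ∃ C, ∀ x ∈ s, |uncurry f x| ≤ C

namespace BoundedMeasurableOn

variable {f g : ℝ → ℝ → ℝ} {s : Set (ℝ × ℝ)}

theorem of_mem_Icc (hf : Measurable (uncurry f)) (h : ∀ x ∈ s, uncurry f x ∈ Icc 0 1) :
    BoundedMeasurableOn f s :=
  ⟨hf, 1, fun x hx => abs_le.2 ⟨by linarith [(h x hx).1], (h x hx).2⟩⟩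

theorem const (c : ℝ) : BoundedMeasurableOn (fun _ _ => c) s :=
  ⟨measurable_const, |c|, fun _ _ => le_rfl⟩

theorem sub (hf : BoundedMeasurableOn f s) (hg : BoundedMeasurableOn g s) :
    BoundedMeasurableOn (fun θ l => f θ l - g θ l) s := by
  obtain ⟨hfm, C, hC⟩ := hf
  obtain ⟨hgm, C', hC'⟩ := hg
  exact ⟨hfm.sub hgm, C + C', fun x hx => (abs_sub _ _).trans (add_le_add (hC x hx) (hC' x hx))⟩

theorem mul (hf : BoundedMeasurableOn f s) (hg : BoundedMeasurableOn g s) :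
    BoundedMeasurableOn (fun θ l => f θ l * g θ l) s := by
  obtain ⟨hfm, C, hC⟩ := hf
  obtain ⟨hgm, C', hC'⟩ := hg
  refine ⟨hfm.mul hgm, C * C', fun x hx => ?_⟩
  rw [uncurry_apply_pair, abs_mul]
  exact mul_le_mul (hC x hx) (hC' x hx) (abs_nonneg _) ((abs_nonneg _).trans (hC x hx))

variable {a b L θ : ℝ}

theorem intervalIntegrable_apply (hf : BoundedMeasurableOn f (Icc a b ×ˢ Icc 0 L))
    (hL : 0 ≤ L) (hθ : θ ∈ Icc a b) : IntervalIntegrable (f θ) volume 0 L := by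
  obtain ⟨hfm, C, hC⟩ := hf
  refine (intervalIntegrable_const (c := C)).mono_fun'
    (hfm.comp measurable_prodMk_left).aestronglyMeasurable
    ((ae_restrict_iff' measurableSet_uIoc).2 (Eventually.of_forall fun l hl => ?_))
  rw [uIoc_of_le hL] at hl
  exact hC (θ, l) ⟨hθ, Ioc_subset_Icc_self hl⟩

theorem exists_norm_integral_le (hf : BoundedMeasurableOn f (Icc a b ×ˢ Icc 0 L))
    (hL : 0 ≤ L) : ∃ C, ∀ θ ∈ Icc a b, ‖∫ l in 0..L, f θ l‖ ≤ C := by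
  obtain ⟨-, C, hC⟩ := hf
  refine ⟨C * |L - 0|, fun θ hθ =>
    intervalIntegral.norm_integral_le_of_norm_le_const fun l hl => ?_⟩
  rw [uIoc_of_le hL] at hl
  exact hC (θ, l) ⟨hθ, Ioc_subset_Icc_self hl⟩

theorem measurable_integral (hf : BoundedMeasurableOn f s) (L : ℝ) :
    Measurable fun θ => ∫ l in 0..L, f θ l := by
  simp only [intervalIntegral]
  exact (hf.1.stronglyMeasurable.integral_prod_right'.sub
    hf.1.stronglyMeasurable.integral_prod_right').measurable

theorem intervalIntegrable_integral_mul (hf : BoundedMeasurableOn f (Icc a b ×ˢ Icc 0 L))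
    (hab : a ≤ b) (hL : 0 ≤ L) {q : ℝ → ℝ} (hq : IntervalIntegrable q volume a b) :
    IntervalIntegrable (fun θ => (∫ l in 0..L, f θ l) * q θ) volume a b := by
  obtain ⟨C, hC⟩ := hf.exists_norm_integral_le hL
  rw [intervalIntegrable_iff_integrableOn_Ioc_of_le hab] at hq ⊢
  exact hq.bdd_mul (hf.measurable_integral L).aestronglyMeasurable
    ((ae_restrict_iff' measurableSet_Ioc).2 (Eventually.of_forall fun θ hθ =>
      hC θ (Ioc_subset_Icc_self hθ)))

theorem intervalIntegrable_integral (hf : BoundedMeasurableOn f (Icc a b ×ˢ Icc 0 L))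
    (hab : a ≤ b) (hL : 0 ≤ L) :
    IntervalIntegrable (fun θ => ∫ l in 0..L, f θ l) volume a b := by
  simpa using hf.intervalIntegrable_integral_mul hab hL (q := 1) intervalIntegrable_const

end BoundedMeasurableOn

open intervalIntegral

section Envelope

variable {a b L θ : ℝ} {G H r D : ℝ → ℝ → ℝ}

theorem integral_mul_add_integral_mul_one_sub_eq
    (hG : BoundedMeasurableOn G (Icc a b ×ˢ Icc 0 L))
    (hH : BoundedMeasurableOn H (Icc a b ×ˢ Icc 0 L))
    (hr : BoundedMeasurableOn r (Icc a b ×ˢ Icc 0 L)) (hL : 0 ≤ L) (hθ : θ ∈ Icc a b) :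
    (∫ l in 0..L, (1 - G θ l) * r θ l) + ∫ l in 0..L, (1 - H θ l) * (1 - r θ l) =
      (∫ l in 0..L, 1 - H θ l) + ∫ l in 0..L, (H θ l - G θ l) * r θ l := by
  have h1G := (BoundedMeasurableOn.const 1).sub hG
  have h1H := (BoundedMeasurableOn.const 1).sub hH
  rw [← intervalIntegral.integral_add ((h1G.mul hr).intervalIntegrable_apply hL hθ)
      ((h1H.mul ((BoundedMeasurableOn.const 1).sub hr)).intervalIntegrable_apply hL hθ),
    ← intervalIntegral.integral_add (h1H.intervalIntegrable_apply hL hθ)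
      (((hH.sub hG).mul hr).intervalIntegrable_apply hL hθ)]
  exact integral_congr fun l _ => by ring

theorem integral_utility_mul_eq_of_envelope {PA : ℝ} (hab : a ≤ b) (hL : 0 ≤ L)
    (hG : BoundedMeasurableOn G (Icc a b ×ˢ Icc 0 L))
    (hH : BoundedMeasurableOn H (Icc a b ×ˢ Icc 0 L))
    (hr : BoundedMeasurableOn r (Icc a b ×ˢ Icc 0 L))
    (hD : BoundedMeasurableOn D (Icc a b ×ˢ Icc 0 L))
    {p q : ℝ → ℝ} (hq : IntervalIntegrable q volume a b) (hq1 : ∫ θ in a..b, q θ = 1)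
    (hp : ∀ θ ∈ Icc a b, p θ = PA - (∫ s in a..θ, ∫ l in 0..L, D s l * r s l)
      - ∫ l in 0..L, (1 - G θ l) * r θ l) :
    ∫ θ in a..b, (p θ - ∫ l in 0..L, (1 - H θ l) * (1 - r θ l)) * q θ =
      PA - (∫ θ in a..b, ∫ l in 0..L, (1 - H θ l) * q θ)
        - ∫ θ in a..b, ∫ l in 0..L,
            ((H θ l - G θ l) * q θ + D θ l * ∫ s in θ..b, q s) * r θ l := by
  set φ := fun s => ∫ l in 0..L, D s l * r s l
  set Q := fun θ => ∫ s in θ..b, q s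
  have hφ : IntervalIntegrable φ volume a b := (hD.mul hr).intervalIntegrable_integral hab hL
  have hQ : IntervalIntegrable Q volume a b :=
    (continuousOn_primitive_interval_left ((intervalIntegrable_iff').1 hq)).intervalIntegrable
  have hΦq : IntervalIntegrable (fun θ => (∫ s in a..θ, φ s) * q θ) volume a b :=
    hq.continuousOn_mul (continuousOn_primitive_interval' hφ left_mem_uIcc)
  have hW := ((BoundedMeasurableOn.const 1).sub hH).intervalIntegrable_integral_mul hab hL hq
  have hU := ((hH.sub hG).mul hr).intervalIntegrable_integral_mul hab hL hq
  have hφQ := (hD.mul hr).intervalIntegrable_integral_mul hab hL hQ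
  have hLHS : ∀ θ ∈ uIcc a b, (p θ - ∫ l in 0..L, (1 - H θ l) * (1 - r θ l)) * q θ =
      PA * q θ - (∫ s in a..θ, φ s) * q θ - ((∫ l in 0..L, 1 - H θ l) * q θ
        + (∫ l in 0..L, (H θ l - G θ l) * r θ l) * q θ) := fun θ hθ => by
    rw [uIcc_of_le hab] at hθ
    rw [hp θ hθ]
    linear_combination (-q θ) * integral_mul_add_integral_mul_one_sub_eq hG hH hr hL hθ
  have hRHS : ∀ θ ∈ uIcc a b, ∫ l in 0..L, ((H θ l - G θ l) * q θ + D θ l * Q θ) * r θ l =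
      (∫ l in 0..L, (H θ l - G θ l) * r θ l) * q θ + φ θ * Q θ := fun θ hθ => by
    rw [uIcc_of_le hab] at hθ
    rw [← intervalIntegral.integral_mul_const, ← intervalIntegral.integral_mul_const,
      ← intervalIntegral.integral_add
        ((((hH.sub hG).mul hr).intervalIntegrable_apply hL hθ).mul_const _)
        (((hD.mul hr).intervalIntegrable_apply hL hθ).mul_const _)]
    exact integral_congr fun l _ => by ring
  simp only [intervalIntegral.integral_mul_const]
  rw [integral_congr hLHS, integral_congr hRHS,
    intervalIntegral.integral_sub ((hq.const_mul PA).sub hΦq) (hW.add hU),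
    intervalIntegral.integral_sub (hq.const_mul PA) hΦq, intervalIntegral.integral_add hW hU,
    intervalIntegral.integral_add hU hφQ, intervalIntegral.integral_const_mul, hq1,
    integral_primitive_mul_eq_integral_mul_integral hφ hq]
  ring

end Envelope

theorem insurer_aggregate_utility_identity_general
    (θlow θhigh Lbar : ℝ) (hθ : θlow < θhigh) (hL : 0 < Lbar)
    (g : ℝ → ℝ → ℝ) (gIn : ℝ → ℝ) (F : ℝ → ℝ → ℝ)
    (hg_range : ∀ θ ∈ Set.Icc θlow θhigh, ∀ t ∈ Set.Icc (0 : ℝ) 1,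
      g θ t ∈ Set.Icc (0 : ℝ) 1)
    (hgIn_range : ∀ t ∈ Set.Icc (0 : ℝ) 1, gIn t ∈ Set.Icc (0 : ℝ) 1)
    (hF_range : ∀ θ ∈ Set.Icc θlow θhigh, ∀ l ∈ Set.Icc (0 : ℝ) Lbar,
      F θ l ∈ Set.Icc (0 : ℝ) 1)
    (hgF_meas : Measurable fun x : ℝ × ℝ => g x.1 (F x.1 x.2))
    (hgInF_meas : Measurable fun x : ℝ × ℝ => gIn (F x.1 x.2))
    (r : ℝ → ℝ → ℝ) (p : ℝ → ℝ)
    (hr_meas : Measurable (Function.uncurry r))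
    (hr_range : ∀ θ ∈ Set.Icc θlow θhigh, ∀ l ∈ Set.Icc (0 : ℝ) Lbar,
      r θ l ∈ Set.Icc (0 : ℝ) 1)
    (q : ℝ → ℝ)
    (hq_cont : ContinuousOn q (Set.Icc θlow θhigh))
    (hq_int : (∫ s in θlow..θhigh, q s) = 1)
    (D : ℝ → ℝ → ℝ)
    (hD : ∀ l ∈ Set.Icc (0 : ℝ) Lbar, ∀ s ∈ Set.Icc θlow θhigh,
      HasDerivWithinAt (fun t => g t (F t l)) (D s l) (Set.Icc θlow θhigh) s)
    (hLip : ∃ C : NNReal, ∀ l ∈ Set.Icc (0 : ℝ) Lbar,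
      LipschitzOnWith C (fun s => g s (F s l)) (Set.Icc θlow θhigh))
    (hD_meas : Measurable (Function.uncurry D))
    -- the premium formula (★)
    (hstar : ∀ θ ∈ Set.Icc θlow θhigh,
      p θ = p θlow + (∫ l in (0 : ℝ)..Lbar, (1 - g θlow (F θlow l)) * r θlow l)
        - (∫ s in θlow..θ, ∫ l in (0 : ℝ)..Lbar, D s l * r s l)
        - ∫ l in (0 : ℝ)..Lbar, (1 - g θ (F θ l)) * r θ l) :
    (∫ θ in θlow..θhigh, Vin gIn F Lbar θ (r θ) (p θ) * q θ) =
      p θlow + (∫ l in (0 : ℝ)..Lbar, (1 - g θlow (F θlow l)) * r θlow l) -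
        (∫ θ in θlow..θhigh, ∫ l in (0 : ℝ)..Lbar, (1 - gIn (F θ l)) * q θ) -
        ∫ θ in θlow..θhigh, ∫ l in (0 : ℝ)..Lbar,
          ((gIn (F θ l) - g θ (F θ l)) * q θ +
            D θ l * (∫ s in θ..θhigh, q s)) * r θ l := by
  obtain ⟨C, hC⟩ := hLip
  have hG : BoundedMeasurableOn (fun θ l => g θ (F θ l)) (Icc θlow θhigh ×ˢ Icc 0 Lbar) :=
    .of_mem_Icc hgF_meas fun x hx => hg_range _ hx.1 _ (hF_range _ hx.1 _ hx.2)
  have hH : BoundedMeasurableOn (fun θ l => gIn (F θ l)) (Icc θlow θhigh ×ˢ Icc 0 Lbar) :=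
    .of_mem_Icc hgInF_meas fun x hx => hgIn_range _ (hF_range _ hx.1 _ hx.2)
  have hr : BoundedMeasurableOn r (Icc θlow θhigh ×ˢ Icc 0 Lbar) :=
    .of_mem_Icc hr_meas fun x hx => hr_range _ hx.1 _ hx.2
  have hDb : BoundedMeasurableOn D (Icc θlow θhigh ×ˢ Icc 0 Lbar) :=
    ⟨hD_meas, C, fun x hx => (hD x.2 hx.2 x.1 hx.1).norm_le_of_lipschitzOnWith hx.1
      (uniqueDiffOn_Icc hθ _ hx.1).accPt (hC x.2 hx.2)⟩
  exact integral_utility_mul_eq_of_envelope hθ.le hL.le hG hH hr hDb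
    (hq_cont.intervalIntegrable_of_Icc hθ.le) hq_int hstar

/-- **Insurer's aggregate utility under incentive compatibility (eq:barV).** If the premia
satisfy the envelope formula (★), then the insurer's total utility equals
`p_{θ̲} + ∫ (1−g_{θ̲}(F_{θ̲})) r_{θ̲} − ∫_Θ ∫₀^{L̄} (1−g^In(F_θ(l))) q(θ) dl dθ
− ∫_Θ ∫₀^{L̄} [ (g^In(F_θ(l)) − g_θ(F_θ(l))) q(θ) + D(θ,l) Q̄(θ) ] r_θ(l) dl dθ`. -/
theorem insurer_aggregate_utility_identity
    (θlow θhigh Lbar : ℝ) (hθ : θlow < θhigh) (hL : 0 < Lbar)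
    (g : ℝ → ℝ → ℝ) (gIn : ℝ → ℝ) (F : ℝ → ℝ → ℝ)
    (hg_mono : ∀ θ ∈ Set.Icc θlow θhigh, MonotoneOn (g θ) (Set.Icc (0 : ℝ) 1))
    (hg0 : ∀ θ ∈ Set.Icc θlow θhigh, g θ 0 = 0)
    (hg1 : ∀ θ ∈ Set.Icc θlow θhigh, g θ 1 = 1)
    (hg_range : ∀ θ ∈ Set.Icc θlow θhigh, ∀ t ∈ Set.Icc (0 : ℝ) 1,
      g θ t ∈ Set.Icc (0 : ℝ) 1)
    (hgIn_mono : MonotoneOn gIn (Set.Icc (0 : ℝ) 1))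
    (hgIn0 : gIn 0 = 0) (hgIn1 : gIn 1 = 1)
    (hgIn_range : ∀ t ∈ Set.Icc (0 : ℝ) 1, gIn t ∈ Set.Icc (0 : ℝ) 1)
    (hF_range : ∀ θ ∈ Set.Icc θlow θhigh, ∀ l ∈ Set.Icc (0 : ℝ) Lbar,
      F θ l ∈ Set.Icc (0 : ℝ) 1)
    (hgF_meas : Measurable fun x : ℝ × ℝ => g x.1 (F x.1 x.2))
    (hgInF_meas : Measurable fun x : ℝ × ℝ => gIn (F x.1 x.2))
    (r : ℝ → ℝ → ℝ) (p : ℝ → ℝ)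
    (hr_meas : Measurable (Function.uncurry r)) (hp_meas : Measurable p)
    (hr_range : ∀ θ ∈ Set.Icc θlow θhigh, ∀ l ∈ Set.Icc (0 : ℝ) Lbar,
      r θ l ∈ Set.Icc (0 : ℝ) 1)
    (q : ℝ → ℝ)
    (hq_cont : ContinuousOn q (Set.Icc θlow θhigh))
    (hq_nonneg : ∀ θ ∈ Set.Icc θlow θhigh, 0 ≤ q θ)
    (hq_int : (∫ s in θlow..θhigh, q s) = 1)
    (D : ℝ → ℝ → ℝ)
    (hD : ∀ l ∈ Set.Icc (0 : ℝ) Lbar, ∀ s ∈ Set.Icc θlow θhigh,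
      HasDerivWithinAt (fun t => g t (F t l)) (D s l) (Set.Icc θlow θhigh) s)
    (hLip : ∃ C : NNReal, ∀ l ∈ Set.Icc (0 : ℝ) Lbar,
      LipschitzOnWith C (fun s => g s (F s l)) (Set.Icc θlow θhigh))
    (hD_meas : Measurable (Function.uncurry D))
    -- the premium formula (★)
    (hstar : ∀ θ ∈ Set.Icc θlow θhigh,
      p θ = p θlow + (∫ l in (0 : ℝ)..Lbar, (1 - g θlow (F θlow l)) * r θlow l)
        - (∫ s in θlow..θ, ∫ l in (0 : ℝ)..Lbar, D s l * r s l)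
        - ∫ l in (0 : ℝ)..Lbar, (1 - g θ (F θ l)) * r θ l) :
    (∫ θ in θlow..θhigh, Vin gIn F Lbar θ (r θ) (p θ) * q θ) =
      p θlow + (∫ l in (0 : ℝ)..Lbar, (1 - g θlow (F θlow l)) * r θlow l) -
        (∫ θ in θlow..θhigh, ∫ l in (0 : ℝ)..Lbar, (1 - gIn (F θ l)) * q θ) -
        ∫ θ in θlow..θhigh, ∫ l in (0 : ℝ)..Lbar,
          ((gIn (F θ l) - g θ (F θ l)) * q θ +
            D θ l * (∫ s in θ..θhigh, q s)) * r θ l :=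
  insurer_aggregate_utility_identity_general θlow θhigh Lbar hθ hL g gIn F hg_range hgIn_range
    hF_range hgF_meas hgInF_meas r p hr_meas hr_range q hq_cont hq_int D hD hLip hD_meas hstar
end

section
/- (Proposition: the insurer's utility is nonincreasing in the type under full coverage.) Suppose r_θ(l) = 0 for all θ ∈ Θ and l ∈ [0,L̄] (full coverage), and p_θ = ∫₀^{L̄} (1 − g_{θ̲}(F_{θ̲}(l))) dl for every θ ∈ Θ (the form the optimal premium formula takes when r ≡ 0). Assume the types are ordered by first-order stochastic dominance: F_θ(l) is nonincreasing in θ for every l ∈ [0,L̄]. Then θ ↦ V_θ(r_θ, p_θ) is nonincreasing on Θ: for all θ₁ ≤ θ₂ in Θ, V_{θ₂}(r_{θ₂}, p_{θ₂}) ≤ V_{θ₁}(r_{θ₁}, p_{θ₁}). -/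
open MeasureTheory

/-- **The insurer's utility is nonincreasing in the type under full coverage.** With
`r ≡ 0`, constant premia `p_θ = ∫₀^{L̄} (1 − g_{θ̲}(F_{θ̲}(l))) dl`, and losses ordered by
first-order stochastic dominance (`F_θ(l)` nonincreasing in `θ`), the insurer's utility
`θ ↦ V_θ(r_θ, p_θ)` is nonincreasing on `Θ`. -/
theorem insurer_utility_antitone_full_coverage
    (θlow θhigh Lbar : ℝ) (hθ : θlow < θhigh) (hL : 0 < Lbar)
    (g : ℝ → ℝ → ℝ) (gIn : ℝ → ℝ) (F : ℝ → ℝ → ℝ)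
    (hg_mono : ∀ θ ∈ Set.Icc θlow θhigh, MonotoneOn (g θ) (Set.Icc (0 : ℝ) 1))
    (hg0 : ∀ θ ∈ Set.Icc θlow θhigh, g θ 0 = 0)
    (hg1 : ∀ θ ∈ Set.Icc θlow θhigh, g θ 1 = 1)
    (hg_range : ∀ θ ∈ Set.Icc θlow θhigh, ∀ t ∈ Set.Icc (0 : ℝ) 1,
      g θ t ∈ Set.Icc (0 : ℝ) 1)
    (hgIn_mono : MonotoneOn gIn (Set.Icc (0 : ℝ) 1))
    (hgIn0 : gIn 0 = 0) (hgIn1 : gIn 1 = 1)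
    (hgIn_range : ∀ t ∈ Set.Icc (0 : ℝ) 1, gIn t ∈ Set.Icc (0 : ℝ) 1)
    (hF_range : ∀ θ ∈ Set.Icc θlow θhigh, ∀ l ∈ Set.Icc (0 : ℝ) Lbar,
      F θ l ∈ Set.Icc (0 : ℝ) 1)
    (hgF_meas : Measurable fun x : ℝ × ℝ => g x.1 (F x.1 x.2))
    (hgInF_meas : Measurable fun x : ℝ × ℝ => gIn (F x.1 x.2))
    (r : ℝ → ℝ → ℝ) (p : ℝ → ℝ)
    (hr_meas : Measurable (Function.uncurry r)) (hp_meas : Measurable p)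
    -- full coverage
    (hr0 : ∀ θ ∈ Set.Icc θlow θhigh, ∀ l ∈ Set.Icc (0 : ℝ) Lbar, r θ l = 0)
    -- the premium when `r ≡ 0`
    (hp : ∀ θ ∈ Set.Icc θlow θhigh,
      p θ = ∫ l in (0 : ℝ)..Lbar, (1 - g θlow (F θlow l)))
    -- first-order stochastic dominance ordering of the types
    (hFOSD : ∀ l ∈ Set.Icc (0 : ℝ) Lbar, ∀ θ₁ ∈ Set.Icc θlow θhigh,
      ∀ θ₂ ∈ Set.Icc θlow θhigh, θ₁ ≤ θ₂ → F θ₂ l ≤ F θ₁ l) :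
    ∀ θ₁ ∈ Set.Icc θlow θhigh, ∀ θ₂ ∈ Set.Icc θlow θhigh, θ₁ ≤ θ₂ →
      Vin gIn F Lbar θ₂ (r θ₂) (p θ₂) ≤ Vin gIn F Lbar θ₁ (r θ₁) (p θ₁) := by
  intro θ₁ hθ₁ θ₂ hθ₂ h12
  have hmeas : ∀ θ, Measurable fun l : ℝ => 1 - gIn (F θ l) := by
    intro θ
    exact measurable_const.sub (hgInF_meas.comp (measurable_const.prodMk measurable_id))
  have hint : ∀ θ ∈ Set.Icc θlow θhigh,
      IntervalIntegrable (fun l : ℝ => 1 - gIn (F θ l)) volume 0 Lbar := by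
    intro θ hθm
    refine (intervalIntegrable_const (c := (1:ℝ))).mono_fun
      (hmeas θ).aestronglyMeasurable ?_
    filter_upwards [ae_restrict_mem measurableSet_Ioc] with l hl
    rw [Set.uIoc_of_le hL.le] at hl
    have hFl := hF_range θ hθm l (Set.mem_Icc.mpr ⟨hl.1.le, hl.2⟩)
    have := hgIn_range (F θ l) hFl
    simp only [Real.norm_eq_abs]
    rw [abs_of_nonneg (by linarith [this.2]), abs_one]
    linarith [this.1]
  have hcongr : ∀ θ ∈ Set.Icc θlow θhigh,
      (∫ l in (0:ℝ)..Lbar, (1 - gIn (F θ l)) * (1 - r θ l))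
        = ∫ l in (0:ℝ)..Lbar, (1 - gIn (F θ l)) := by
    intro θ hθm
    refine intervalIntegral.integral_congr fun l hl => ?_
    rw [Set.uIcc_of_le hL.le] at hl
    rw [hr0 θ hθm l hl]
    ring
  have hmono : (∫ l in (0:ℝ)..Lbar, (1 - gIn (F θ₁ l)))
      ≤ ∫ l in (0:ℝ)..Lbar, (1 - gIn (F θ₂ l)) := by
    refine intervalIntegral.integral_mono_on hL.le (hint θ₁ hθ₁) (hint θ₂ hθ₂) fun l hl => ?_
    have hF2 := hF_range θ₂ hθ₂ l hl
    have hF1 := hF_range θ₁ hθ₁ l hl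
    have := hgIn_mono hF2 hF1 (hFOSD l hl θ₁ hθ₁ θ₂ hθ₂ h12)
    linarith
  have hpeq : p θ₂ = p θ₁ := by rw [hp θ₂ hθ₂, hp θ₁ hθ₁]
  simp only [Vin, hcongr θ₁ hθ₁, hcongr θ₂ hθ₂, hpeq]
  linarith
end

section
/- (Proposition: monotonicity of optimal premia.) Suppose the menu's retentions are submodular, i.e. r_θ(l) is nonincreasing in θ for every l ∈ [0,L̄], and the premia satisfy the premium formula (★): p_θ = p_{θ̲} + ∫₀^{L̄} (1 − g_{θ̲}(F_{θ̲}(l))) r_{θ̲}(l) dl − ∫_{θ̲}^{θ} ∫₀^{L̄} D(s,l) r_s(l) dl ds − ∫₀^{L̄} (1 − g_θ(F_θ(l))) r_θ(l) dl for every θ ∈ Θ. Then θ ↦ p_θ is nondecreasing on Θ: for all θ₁ ≤ θ₂ in Θ, p_{θ₁} ≤ p_{θ₂}. -/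
/-!
Write `h s l = g s (F s l)` and `G θ = ∫ (1 - h θ l) r θ l dl`. By (★),
`p θ₂ - p θ₁ = G θ₁ - G θ₂ - ∫_{θ₁}^{θ₂} ∫ D s l * r s l dl ds`. Since `D ≤ 0` and `r s ≥ r θ₂`
for `s ≤ θ₂`, the double integral is at most `∫_{θ₁}^{θ₂} ∫ D s l * r θ₂ l dl ds`, which by Fubini
and the fundamental theorem of calculus in `s` equals `∫ (h θ₂ l - h θ₁ l) r θ₂ l dl`. Finally
`G θ₁ - G θ₂ - ∫ (h θ₂ - h θ₁) r θ₂ = ∫ (1 - h θ₁) (r θ₁ - r θ₂) ≥ 0`. The Lipschitz bound makes `D`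
bounded, which supplies all the integrability.
-/

open MeasureTheory Set Function

lemma intervalIntegrable_of_norm_le {f : ℝ → ℝ} {a b C : ℝ} (hab : a ≤ b)
    (hf : AEStronglyMeasurable f) (hC : ∀ s ∈ Ioo a b, ‖f s‖ ≤ C) :
    IntervalIntegrable f volume a b := by
  rw [intervalIntegrable_iff_integrableOn_Ioo_of_le hab]
  exact Integrable.of_bound hf.restrict C (ae_restrict_of_forall_mem measurableSet_Ioo hC)

theorem integral_eq_sub_of_continuousOn_of_norm_le {f f' : ℝ → ℝ} {a b C : ℝ} (hab : a ≤ b)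
    (hcont : ContinuousOn f (Icc a b)) (hderiv : ∀ s ∈ Ioo a b, HasDerivAt f (f' s) s)
    (hf' : Measurable f') (hC : ∀ s ∈ Ioo a b, ‖f' s‖ ≤ C) :
    ∫ s in a..b, f' s = f b - f a :=
  intervalIntegral.integral_eq_sub_of_hasDerivAt_of_le hab hcont hderiv
    (intervalIntegrable_of_norm_le hab hf'.aestronglyMeasurable hC)

section

variable {α : Type*} [MeasurableSpace α] {μ : Measure α}

theorem integral_sub_mul_le_sub_integral {h₁ h₂ r₁ r₂ : α → ℝ}
    (hi₁ : Integrable (fun l => (1 - h₁ l) * r₁ l) μ)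
    (hi₂ : Integrable (fun l => (1 - h₂ l) * r₂ l) μ)
    (hi : Integrable (fun l => (h₂ l - h₁ l) * r₂ l) μ)
    (hh₁ : ∀ᵐ l ∂μ, h₁ l ≤ 1) (hr : ∀ᵐ l ∂μ, r₂ l ≤ r₁ l) :
    ∫ l, (h₂ l - h₁ l) * r₂ l ∂μ ≤ ∫ l, (1 - h₁ l) * r₁ l ∂μ - ∫ l, (1 - h₂ l) * r₂ l ∂μ := by
  rw [le_sub_iff_add_le, ← integral_add hi hi₂]
  refine integral_mono_ae (hi.add hi₂) hi₁ ?_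
  filter_upwards [hh₁, hr] with l hhl hrl
  have := mul_le_mul_of_nonneg_left hrl (sub_nonneg.2 hhl)
  linarith

variable [IsFiniteMeasure μ]

lemma intervalIntegrable_integral_of_norm_le {f : ℝ → α → ℝ} {a b C : ℝ} (hab : a ≤ b)
    (hf : Measurable (uncurry f)) (hC : ∀ᵐ l ∂μ, ∀ s ∈ Ioo a b, ‖f s l‖ ≤ C) :
    IntervalIntegrable (fun s => ∫ l, f s l ∂μ) volume a b :=
  intervalIntegrable_of_norm_le hab
    hf.stronglyMeasurable.integral_prod_right'.aestronglyMeasurable fun s hs =>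
      norm_integral_le_of_norm_le_const (hC.mono fun _ hl => hl s hs)

lemma integrable_prod_of_norm_le {f : ℝ → α → ℝ} {a b C : ℝ}
    (hf : Measurable (uncurry f)) (hC : ∀ᵐ l ∂μ, ∀ s ∈ Ioo a b, ‖f s l‖ ≤ C) :
    Integrable (uncurry f) ((volume.restrict (Ioo a b)).prod μ) := by
  refine .of_bound hf.aestronglyMeasurable C
    ((Measure.ae_prod_iff_ae_ae (measurableSet_le hf.norm measurable_const)).2 ?_)
  filter_upwards [ae_restrict_mem measurableSet_Ioo] with s hs
  filter_upwards [hC] with l hl using hl s hs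

theorem intervalIntegral_integral_mul_eq_integral_sub_mul {h D : ℝ → α → ℝ} {φ : α → ℝ}
    {a b C M : ℝ} (hab : a ≤ b) (hD : Measurable (uncurry D)) (hφ : Measurable φ)
    (hφM : ∀ᵐ l ∂μ, ‖φ l‖ ≤ M) (hcont : ∀ᵐ l ∂μ, ContinuousOn (h · l) (Icc a b))
    (hderiv : ∀ᵐ l ∂μ, ∀ s ∈ Ioo a b, HasDerivAt (h · l) (D s l) s)
    (hDC : ∀ᵐ l ∂μ, ∀ s ∈ Ioo a b, ‖D s l‖ ≤ C) :
    ∫ s in a..b, ∫ l, D s l * φ l ∂μ = ∫ l, (h b l - h a l) * φ l ∂μ := by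
  have hint : Integrable (uncurry fun s l => D s l * φ l)
      ((volume.restrict (uIoc a b)).prod μ) := by
    rw [uIoc_of_le hab, ← Measure.restrict_congr_set Ioo_ae_eq_Ioc]
    refine integrable_prod_of_norm_le (C := C * M) (hD.mul (hφ.comp measurable_snd)) ?_
    filter_upwards [hDC, hφM] with l hDl hφl using fun s hs => norm_mul_le_of_le (hDl s hs) hφl
  rw [intervalIntegral_integral_swap hint]
  refine integral_congr_ae ?_
  filter_upwards [hcont, hderiv, hDC] with l hcl hdl hDl
  rw [intervalIntegral.integral_mul_const,
    integral_eq_sub_of_continuousOn_of_norm_le hab hcl hdl hD.of_uncurry_right hDl]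

theorem intervalIntegral_integral_mul_le_of_antitoneOn {D r : ℝ → α → ℝ} {a b C : ℝ}
    (hab : a ≤ b) (hD : Measurable (uncurry D)) (hr : Measurable (uncurry r))
    (hDC : ∀ᵐ l ∂μ, ∀ s ∈ Ioo a b, ‖D s l‖ ≤ C) (hr1 : ∀ᵐ l ∂μ, ∀ s ∈ Icc a b, ‖r s l‖ ≤ 1)
    (hD_nonpos : ∀ᵐ l ∂μ, ∀ s ∈ Ioo a b, D s l ≤ 0)
    (hr_anti : ∀ᵐ l ∂μ, AntitoneOn (r · l) (Icc a b)) :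
    ∫ s in a..b, ∫ l, D s l * r s l ∂μ ≤ ∫ s in a..b, ∫ l, D s l * r b l ∂μ := by
  have hb : b ∈ Icc a b := right_mem_Icc.2 hab
  have hbound : ∀ᵐ l ∂μ, ∀ s ∈ Ioo a b, ∀ t ∈ Icc a b, ‖D s l * r t l‖ ≤ C * 1 := by
    filter_upwards [hDC, hr1] with l hDl hrl using
      fun s hs t ht => norm_mul_le_of_le (hDl s hs) (hrl t ht)
  have hdiag := hbound.mono fun _ hl s hs => hl s hs s (Ioo_subset_Icc_self hs)
  have hright := hbound.mono fun _ hl s hs => hl s hs b hb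
  refine intervalIntegral.integral_mono_on_of_le_Ioo hab
    (intervalIntegrable_integral_of_norm_le (f := fun s l => D s l * r s l) hab (hD.mul hr) hdiag)
    (intervalIntegrable_integral_of_norm_le (f := fun s l => D s l * r b l) hab
      (hD.mul (hr.of_uncurry_left.comp measurable_snd)) hright)
    fun s hs => integral_mono_ae ?_ ?_ ?_
  · exact .of_bound (hD.of_uncurry_left.mul hr.of_uncurry_left).aestronglyMeasurable _
      (hdiag.mono fun _ hl => hl s hs)
  · exact .of_bound (hD.of_uncurry_left.mul hr.of_uncurry_left).aestronglyMeasurable _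
      (hright.mono fun _ hl => hl s hs)
  · filter_upwards [hD_nonpos, hr_anti] with l hDl hrl using
      mul_le_mul_of_nonpos_left (hrl (Ioo_subset_Icc_self hs) hb hs.2.le) (hDl s hs)

theorem intervalIntegral_integral_mul_le_sub_integral {h D r : ℝ → α → ℝ} {a b C : ℝ}
    (hab : a ≤ b) (hh : Measurable (uncurry h)) (hD : Measurable (uncurry D))
    (hr : Measurable (uncurry r))
    (hh1 : ∀ᵐ l ∂μ, ∀ s ∈ Icc a b, ‖h s l‖ ≤ 1) (hr1 : ∀ᵐ l ∂μ, ∀ s ∈ Icc a b, ‖r s l‖ ≤ 1)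
    (hcont : ∀ᵐ l ∂μ, ContinuousOn (h · l) (Icc a b))
    (hderiv : ∀ᵐ l ∂μ, ∀ s ∈ Ioo a b, HasDerivAt (h · l) (D s l) s)
    (hDC : ∀ᵐ l ∂μ, ∀ s ∈ Ioo a b, ‖D s l‖ ≤ C)
    (hD_nonpos : ∀ᵐ l ∂μ, ∀ s ∈ Ioo a b, D s l ≤ 0)
    (hr_anti : ∀ᵐ l ∂μ, AntitoneOn (r · l) (Icc a b)) :
    ∫ s in a..b, ∫ l, D s l * r s l ∂μ
      ≤ ∫ l, (1 - h a l) * r a l ∂μ - ∫ l, (1 - h b l) * r b l ∂μ := by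
  have ha : a ∈ Icc a b := left_mem_Icc.2 hab
  have hb : b ∈ Icc a b := right_mem_Icc.2 hab
  have hrent : ∀ s ∈ Icc a b, Integrable (fun l => (1 - h s l) * r s l) μ := fun s hs =>
    .of_bound
      ((measurable_const.sub hh.of_uncurry_left).mul hr.of_uncurry_left).aestronglyMeasurable _
      (by filter_upwards [hh1, hr1] with l hhl hrl using
        norm_mul_le_of_le (norm_sub_le_of_le norm_one.le (hhl s hs)) (hrl s hs))
  have hincr : Integrable (fun l => (h b l - h a l) * r b l) μ :=
    .of_bound ((hh.of_uncurry_left.sub hh.of_uncurry_left).mul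
      hr.of_uncurry_left).aestronglyMeasurable _
      (by filter_upwards [hh1, hr1] with l hhl hrl using
        norm_mul_le_of_le (norm_sub_le_of_le (hhl b hb) (hhl a ha)) (hrl b hb))
  calc ∫ s in a..b, ∫ l, D s l * r s l ∂μ
      ≤ ∫ s in a..b, ∫ l, D s l * r b l ∂μ :=
        intervalIntegral_integral_mul_le_of_antitoneOn hab hD hr hDC hr1 hD_nonpos hr_anti
    _ = ∫ l, (h b l - h a l) * r b l ∂μ :=
        intervalIntegral_integral_mul_eq_integral_sub_mul hab hD hr.of_uncurry_left
          (hr1.mono fun _ hl => hl b hb) hcont hderiv hDC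
    _ ≤ _ := integral_sub_mul_le_sub_integral (hrent a ha) (hrent b hb) hincr
        (hh1.mono fun _ hl => (le_abs_self _).trans (hl a ha))
        (hr_anti.mono fun _ hl => hl ha hb hab)

theorem monotoneOn_of_envelope_formula {h D r : ℝ → α → ℝ} {p : ℝ → ℝ} {a b C : ℝ}
    (hh : Measurable (uncurry h)) (hD : Measurable (uncurry D)) (hr : Measurable (uncurry r))
    (hh1 : ∀ᵐ l ∂μ, ∀ s ∈ Icc a b, ‖h s l‖ ≤ 1) (hr1 : ∀ᵐ l ∂μ, ∀ s ∈ Icc a b, ‖r s l‖ ≤ 1)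
    (hcont : ∀ᵐ l ∂μ, ContinuousOn (h · l) (Icc a b))
    (hderiv : ∀ᵐ l ∂μ, ∀ s ∈ Ioo a b, HasDerivAt (h · l) (D s l) s)
    (hDC : ∀ᵐ l ∂μ, ∀ s ∈ Ioo a b, ‖D s l‖ ≤ C)
    (hD_nonpos : ∀ᵐ l ∂μ, ∀ s ∈ Ioo a b, D s l ≤ 0)
    (hr_anti : ∀ᵐ l ∂μ, AntitoneOn (r · l) (Icc a b))
    (hp : ∀ θ ∈ Icc a b, p θ = p a + ∫ l, (1 - h a l) * r a l ∂μ
      - (∫ s in a..θ, ∫ l, D s l * r s l ∂μ) - ∫ l, (1 - h θ l) * r θ l ∂μ) :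
    MonotoneOn p (Icc a b) := by
  intro θ₁ h₁ θ₂ h₂ h₁₂
  have hIcc : Icc θ₁ θ₂ ⊆ Icc a b := Icc_subset_Icc h₁.1 h₂.2
  have hIoo : Ioo θ₁ θ₂ ⊆ Ioo a b := Ioo_subset_Ioo h₁.1 h₂.2
  have hint : ∀ θ ∈ Icc a b,
      IntervalIntegrable (fun s => ∫ l, D s l * r s l ∂μ) volume a θ := fun θ hθ =>
    intervalIntegrable_integral_of_norm_le (f := fun s l => D s l * r s l) hθ.1 (hD.mul hr)
      (by
        filter_upwards [hDC, hr1] with l hDl hrl using fun s hs =>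
          norm_mul_le_of_le (hDl s (Ioo_subset_Ioo_right hθ.2 hs))
            (hrl s ⟨hs.1.le, hs.2.le.trans hθ.2⟩))
  have hle := intervalIntegral_integral_mul_le_sub_integral h₁₂ hh hD hr
    (hh1.mono fun _ hl s hs => hl s (hIcc hs)) (hr1.mono fun _ hl s hs => hl s (hIcc hs))
    (hcont.mono fun _ hl => hl.mono hIcc) (hderiv.mono fun _ hl s hs => hl s (hIoo hs))
    (hDC.mono fun _ hl s hs => hl s (hIoo hs)) (hD_nonpos.mono fun _ hl s hs => hl s (hIoo hs))
    (hr_anti.mono fun _ hl => hl.mono hIcc)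
  have hsplit := intervalIntegral.integral_interval_sub_left (hint θ₂ h₂) (hint θ₁ h₁)
  rw [hp θ₁ h₁, hp θ₂ h₂]
  linarith

end

theorem premia_monotone_of_submodular_general
    (θlow θhigh Lbar : ℝ) (hL : 0 < Lbar)
    (g : ℝ → ℝ → ℝ) (F : ℝ → ℝ → ℝ)
    (hg_range : ∀ θ ∈ Set.Icc θlow θhigh, ∀ t ∈ Set.Icc (0 : ℝ) 1,
      g θ t ∈ Set.Icc (0 : ℝ) 1)
    (hF_range : ∀ θ ∈ Set.Icc θlow θhigh, ∀ l ∈ Set.Icc (0 : ℝ) Lbar,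
      F θ l ∈ Set.Icc (0 : ℝ) 1)
    (hgF_meas : Measurable fun x : ℝ × ℝ => g x.1 (F x.1 x.2))
    (r : ℝ → ℝ → ℝ) (p : ℝ → ℝ)
    (hr_meas : Measurable (Function.uncurry r))
    (hr_range : ∀ θ ∈ Set.Icc θlow θhigh, ∀ l ∈ Set.Icc (0 : ℝ) Lbar,
      r θ l ∈ Set.Icc (0 : ℝ) 1)
    (D : ℝ → ℝ → ℝ)
    (hD : ∀ l ∈ Set.Icc (0 : ℝ) Lbar, ∀ s ∈ Set.Icc θlow θhigh,
      HasDerivWithinAt (fun t => g t (F t l)) (D s l) (Set.Icc θlow θhigh) s)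
    (hLip : ∃ C : NNReal, ∀ l ∈ Set.Icc (0 : ℝ) Lbar,
      LipschitzOnWith C (fun s => g s (F s l)) (Set.Icc θlow θhigh))
    (hD_meas : Measurable (Function.uncurry D))
    (hD_nonpos : ∀ s ∈ Set.Icc θlow θhigh, ∀ l ∈ Set.Icc (0 : ℝ) Lbar, D s l ≤ 0)
    -- submodularity: `r_θ(l)` is nonincreasing in `θ` for every `l`
    (hsub : ∀ l ∈ Set.Icc (0 : ℝ) Lbar, ∀ θ₁ ∈ Set.Icc θlow θhigh,
      ∀ θ₂ ∈ Set.Icc θlow θhigh, θ₁ ≤ θ₂ → r θ₂ l ≤ r θ₁ l)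
    -- the premium formula (★)
    (hstar : ∀ θ ∈ Set.Icc θlow θhigh,
      p θ = p θlow + (∫ l in (0 : ℝ)..Lbar, (1 - g θlow (F θlow l)) * r θlow l)
        - (∫ s in θlow..θ, ∫ l in (0 : ℝ)..Lbar, D s l * r s l)
        - ∫ l in (0 : ℝ)..Lbar, (1 - g θ (F θ l)) * r θ l) :
    ∀ θ₁ ∈ Set.Icc θlow θhigh, ∀ θ₂ ∈ Set.Icc θlow θhigh, θ₁ ≤ θ₂ → p θ₁ ≤ p θ₂ := by
  obtain ⟨C, hC⟩ := hLip
  have hae : ∀ᵐ l ∂volume.restrict (Ioc 0 Lbar), l ∈ Icc 0 Lbar :=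
    ae_restrict_of_forall_mem measurableSet_Ioc fun _ hl => Ioc_subset_Icc_self hl
  have hderiv : ∀ l ∈ Icc 0 Lbar, ∀ s ∈ Ioo θlow θhigh,
      HasDerivAt (fun t => g t (F t l)) (D s l) s := fun l hl s hs =>
    (hD l hl s (Ioo_subset_Icc_self hs)).hasDerivAt (Icc_mem_nhds hs.1 hs.2)
  have hnorm : ∀ {x : ℝ}, x ∈ Icc 0 1 → ‖x‖ ≤ 1 := fun hx =>
    (Real.norm_of_nonneg hx.1).trans_le hx.2
  exact monotoneOn_of_envelope_formula (h := fun s l => g s (F s l)) hgF_meas hD_meas hr_meas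
    (hae.mono fun l hl s hs => hnorm (hg_range s hs _ (hF_range s hs l hl)))
    (hae.mono fun l hl s hs => hnorm (hr_range s hs l hl))
    (hae.mono fun l hl => (hC l hl).continuousOn) (hae.mono hderiv)
    (hae.mono fun l hl s hs =>
      (hderiv l hl s hs).le_of_lipschitzOn (Icc_mem_nhds hs.1 hs.2) (hC l hl))
    (hae.mono fun l hl s hs => hD_nonpos s (Ioo_subset_Icc_self hs) l hl)
    (hae.mono hsub)
    fun θ hθ => by simpa only [intervalIntegral.integral_of_le hL.le] using hstar θ hθ

/-- **Monotonicity of optimal premia.** With submodular retentions and premia given by the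
envelope formula (★) (and `D ≤ 0`), the premium `θ ↦ p_θ` is nondecreasing on `Θ`. -/
theorem premia_monotone_of_submodular
    (θlow θhigh Lbar : ℝ) (hθ : θlow < θhigh) (hL : 0 < Lbar)
    (g : ℝ → ℝ → ℝ) (F : ℝ → ℝ → ℝ)
    (hg_mono : ∀ θ ∈ Set.Icc θlow θhigh, MonotoneOn (g θ) (Set.Icc (0 : ℝ) 1))
    (hg0 : ∀ θ ∈ Set.Icc θlow θhigh, g θ 0 = 0)
    (hg1 : ∀ θ ∈ Set.Icc θlow θhigh, g θ 1 = 1)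
    (hg_range : ∀ θ ∈ Set.Icc θlow θhigh, ∀ t ∈ Set.Icc (0 : ℝ) 1,
      g θ t ∈ Set.Icc (0 : ℝ) 1)
    (hF_range : ∀ θ ∈ Set.Icc θlow θhigh, ∀ l ∈ Set.Icc (0 : ℝ) Lbar,
      F θ l ∈ Set.Icc (0 : ℝ) 1)
    (hgF_meas : Measurable fun x : ℝ × ℝ => g x.1 (F x.1 x.2))
    (r : ℝ → ℝ → ℝ) (p : ℝ → ℝ)
    (hr_meas : Measurable (Function.uncurry r)) (hp_meas : Measurable p)
    (hr_range : ∀ θ ∈ Set.Icc θlow θhigh, ∀ l ∈ Set.Icc (0 : ℝ) Lbar,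
      r θ l ∈ Set.Icc (0 : ℝ) 1)
    (D : ℝ → ℝ → ℝ)
    (hD : ∀ l ∈ Set.Icc (0 : ℝ) Lbar, ∀ s ∈ Set.Icc θlow θhigh,
      HasDerivWithinAt (fun t => g t (F t l)) (D s l) (Set.Icc θlow θhigh) s)
    (hLip : ∃ C : NNReal, ∀ l ∈ Set.Icc (0 : ℝ) Lbar,
      LipschitzOnWith C (fun s => g s (F s l)) (Set.Icc θlow θhigh))
    (hD_meas : Measurable (Function.uncurry D))
    (hD_nonpos : ∀ s ∈ Set.Icc θlow θhigh, ∀ l ∈ Set.Icc (0 : ℝ) Lbar, D s l ≤ 0)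
    -- submodularity: `r_θ(l)` is nonincreasing in `θ` for every `l`
    (hsub : ∀ l ∈ Set.Icc (0 : ℝ) Lbar, ∀ θ₁ ∈ Set.Icc θlow θhigh,
      ∀ θ₂ ∈ Set.Icc θlow θhigh, θ₁ ≤ θ₂ → r θ₂ l ≤ r θ₁ l)
    -- the premium formula (★)
    (hstar : ∀ θ ∈ Set.Icc θlow θhigh,
      p θ = p θlow + (∫ l in (0 : ℝ)..Lbar, (1 - g θlow (F θlow l)) * r θlow l)
        - (∫ s in θlow..θ, ∫ l in (0 : ℝ)..Lbar, D s l * r s l)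
        - ∫ l in (0 : ℝ)..Lbar, (1 - g θ (F θ l)) * r θ l) :
    ∀ θ₁ ∈ Set.Icc θlow θhigh, ∀ θ₂ ∈ Set.Icc θlow θhigh, θ₁ ≤ θ₂ → p θ₁ ≤ p θ₂ :=
  premia_monotone_of_submodular_general θlow θhigh Lbar hL g F hg_range hF_range hgF_meas r p
    hr_meas hr_range D hD hLip hD_meas hD_nonpos hsub hstar
end
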